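/- arXiv:1801.05732 — 4 statements merged into one kernel-verified Lean document; each statement's English description precedes it below -/
import Mathlib

section
/- With the notation of the deformation datum, for every u ∈ ℤⁿ such that ⟨u, x⟩ ≥ 0 for all x ∈ σ, the linear functional ũ on ℝⁿ × ℝᵏ defined by ũ(x, y₁, …, y_k) = ⟨u, x⟩ − ∑_{i=1}^{k} ⌊min_{Qᵢ} ⟨u, ·⟩⌋ · yᵢ is nonnegative on σ̃. Consequently, the projection (u, a₁, …, a_k) ↦ u restricts to a surjective map from the set of integral linear functionals on ℝⁿ × ℝᵏ that are nonnegative on σ̃ onto the set of integral linear functionals on ℝⁿ that are nonnegative on σ. -/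
open Set Pointwise

/-- The conical hull of a set `S`: all finite nonnegative linear combinations of
elements of `S`. -/
def coneHull {V : Type*} [AddCommMonoid V] [Module ℝ V] (S : Set V) : Set V :=
  {x | ∃ (m : ℕ) (c : Fin m → ℝ) (v : Fin m → V),
    (∀ i, 0 ≤ c i) ∧ (∀ i, v i ∈ S) ∧ x = ∑ i, c i • v i}

/-- A vector of `ℝᵐ` is integral if all of its coordinates are integers, i.e. it lies in
the lattice `ℤᵐ`. -/
def IsIntegralVec {m : ℕ} (v : Fin m → ℝ) : Prop := ∀ j, ∃ z : ℤ, v j = (z : ℝ)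

/-- A vector of `ℝᵐ` is rational if all of its coordinates are rational, i.e. it lies in
`ℚᵐ`. -/
def IsRationalVec {m : ℕ} (v : Fin m → ℝ) : Prop := ∀ j, ∃ q : ℚ, v j = (q : ℝ)

/-- The standard pairing `⟨u, v⟩ = ∑ j, u j * v j` on `ℝᵐ`. -/
def dot {m : ℕ} (u v : Fin m → ℝ) : ℝ := ∑ j, u j * v j

/-- A deformation datum for `(ℤⁿ, σ)` (Mavlyutov/Altmann): a Minkowski decomposition
`Q = Q₀ + Q₁ + ⋯ + Q_k` of a polyhedron `Q` inside the full-dimensional strongly convex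
rational polyhedral cone `σ ⊆ ℝⁿ`, together with an integral functional `w`, subject to
conditions (i), (ii), (iii), (iv'), (v), (vi). The sets `Q₀, …, Q_k` are indexed by
`Fin (k+1)`, and `Qᵢ = conv(Vᵢ) + coneHull(Rᵢ)` with `Vᵢ` a finite nonempty set of
rational points equal to the set of extreme points of `Qᵢ` and `Rᵢ` a finite set of
rational points. -/
structure DeformationDatum (n k : ℕ) where
  /-- Finite set of lattice generators of `σ`. -/
  S₀ : Finset (Fin n → ℝ)
  hS₀ : ∀ v ∈ S₀, IsIntegralVec v
  /-- The cone `σ`. -/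
  σ : Set (Fin n → ℝ)
  hσ : σ = coneHull (S₀ : Set (Fin n → ℝ))
  /-- `σ` is full-dimensional. -/
  hspan : Submodule.span ℝ σ = ⊤
  /-- `σ` is strongly convex. -/
  hsc : σ ∩ (-σ) = {0}
  /-- The integral functional `w`. -/
  w : Fin n → ℝ
  hw : IsIntegralVec w
  /-- Vertex sets `V₀, …, V_k`. -/
  V : Fin (k + 1) → Finset (Fin n → ℝ)
  /-- Recession generator sets `R₀, …, R_k`. -/
  R : Fin (k + 1) → Finset (Fin n → ℝ)
  hVne : ∀ i, (V i).Nonempty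
  hVQ : ∀ i, ∀ v ∈ V i, IsRationalVec v
  hRQ : ∀ i, ∀ v ∈ R i, IsRationalVec v
  /-- The summands `Q₀, …, Q_k`. -/
  Qi : Fin (k + 1) → Set (Fin n → ℝ)
  hQi : ∀ i, Qi i = convexHull ℝ (V i : Set (Fin n → ℝ)) + coneHull (R i : Set (Fin n → ℝ))
  hVext : ∀ i, (V i : Set (Fin n → ℝ)) = Set.extremePoints ℝ (Qi i)
  /-- The polyhedron `Q`. -/
  Q : Set (Fin n → ℝ)
  /-- (i) `Q ⊆ σ`. -/
  h1 : Q ⊆ σ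
  /-- (ii) `0 ∉ Q`. -/
  h2 : (0 : Fin n → ℝ) ∉ Q
  /-- (iii) `Q = Q₀ + Q₁ + ⋯ + Q_k`. -/
  h3 : Q = ∑ i : Fin (k + 1), Qi i
  /-- (iv') every extreme point of `Q` decomposes as a sum of extreme points of the `Qᵢ`,
  at most one of which is non-integral. -/
  h4' : ∀ v ∈ Set.extremePoints ℝ Q, ∃ vi : Fin (k + 1) → (Fin n → ℝ),
    (∀ i, vi i ∈ Set.extremePoints ℝ (Qi i)) ∧ v = ∑ i, vi i ∧
    ({i | ¬ IsIntegralVec (vi i)} : Set (Fin (k + 1))).Subsingleton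
  /-- (v) the minimum of `⟨w, ·⟩` on `Q` is attained and is `≥ -1`. -/
  h5 : ∃ μ : ℝ, IsLeast ((fun x => dot w x) '' Q) μ ∧ -1 ≤ μ
  /-- (vi) every extreme point of `σ ∩ {⟨w, ·⟩ = -1}` lies in `ℝ⁺ · Q`. -/
  h6 : ∀ v ∈ Set.extremePoints ℝ (σ ∩ {x | dot w x = -1}),
    ∃ lam : ℝ, ∃ q ∈ Q, 0 < lam ∧ v = lam • q

/-- The generating set of the cone `σ̃ ⊆ ℝⁿ × ℝᵏ`:
`(σ × {0}) ∪ {(q, -e₁-⋯-e_k) : q ∈ Q₀} ∪ {(q, eᵢ) : q ∈ Qᵢ, i = 1, …, k}`. -/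
def tildeGens {n k : ℕ} (D : DeformationDatum n k) : Set ((Fin n → ℝ) × (Fin k → ℝ)) :=
  (D.σ ×ˢ ({0} : Set (Fin k → ℝ)))
    ∪ {p | p.1 ∈ D.Qi 0 ∧ p.2 = fun _ => (-1 : ℝ)}
    ∪ ⋃ i : Fin k, {p | p.1 ∈ D.Qi i.succ ∧ p.2 = Pi.single i 1}

/-- The cone `σ̃ ⊆ ℝⁿ × ℝᵏ` associated to a deformation datum. -/
def tildeSigma {n k : ℕ} (D : DeformationDatum n k) : Set ((Fin n → ℝ) × (Fin k → ℝ)) :=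
  coneHull (tildeGens D)

section Aux

variable {n : ℕ}

local notation "V" => (Fin n → ℝ)

/-! ### dot lemmas -/

lemma dot_add_right (u x y : V) : dot u (x + y) = dot u x + dot u y := by
  simp [dot, mul_add, Finset.sum_add_distrib]

lemma dot_smul_right (u : V) (c : ℝ) (x : V) : dot u (c • x) = c * dot u x := by
  simp [dot, Finset.mul_sum]; ring_nf; simp [mul_comm, mul_left_comm]

lemma dot_zero_right (u : V) : dot u 0 = 0 := by simp [dot]

lemma isLinearMap_dot (u : V) : IsLinearMap ℝ (dot u) :=
  ⟨dot_add_right u, fun c x => dot_smul_right u c x⟩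

lemma dot_sum_right (u : V) {ι : Type*} (s : Finset ι) (f : ι → V) :
    dot u (∑ i ∈ s, f i) = ∑ i ∈ s, dot u (f i) := by
  classical
  induction s using Finset.induction with
  | empty => simp [dot]
  | insert _ _ h ih => rw [Finset.sum_insert h, dot_add_right, ih, Finset.sum_insert h]

lemma dot_comm (u v : V) : dot u v = dot v u := by
  simp [dot, mul_comm]

lemma dot_self_nonneg (x : V) : 0 ≤ dot x x :=
  Finset.sum_nonneg fun i _ => mul_self_nonneg _

lemma dot_self_eq_zero {x : V} (h : dot x x = 0) : x = 0 := by
  funext j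
  have h' := (Finset.sum_eq_zero_iff_of_nonneg (fun i _ => mul_self_nonneg (x i))).1 h j
    (Finset.mem_univ j)
  have := mul_self_eq_zero.1 h'
  simpa using this

lemma dot_int {u v : V} (hu : IsIntegralVec u) (hv : IsIntegralVec v) :
    ∃ z : ℤ, dot u v = (z : ℝ) := by
  classical
  choose zu hzu using hu
  choose zv hzv using hv
  exact ⟨∑ j, zu j * zv j, by simp [dot, hzu, hzv]⟩

end Aux
section ConeHull

variable {M : Type*} [AddCommMonoid M] [Module ℝ M]

lemma IsLinearMap.apply_sum_smul {f : M → ℝ} (hf : IsLinearMap ℝ f) {ι : Type*} [Fintype ι]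
    (c : ι → ℝ) (v : ι → M) : f (∑ i, c i • v i) = ∑ i, c i * f (v i) := by
  have h := map_sum (IsLinearMap.mk' f hf) (fun i => c i • v i) Finset.univ
  simp only [IsLinearMap.mk'_apply] at h
  rw [h]
  exact Finset.sum_congr rfl fun i _ => by rw [hf.map_smul, smul_eq_mul]

lemma zero_mem_coneHull (S : Set M) : (0 : M) ∈ coneHull S :=
  ⟨0, ![], ![], by simp, by simp, by simp⟩

lemma subset_coneHull (S : Set M) : S ⊆ coneHull S := fun x hx =>
  ⟨1, ![1], ![x], by simp, by simpa using hx, by simp⟩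

lemma coneHull_mono {S T : Set M} (h : S ⊆ T) : coneHull S ⊆ coneHull T := by
  rintro x ⟨m, c, v, hc, hv, rfl⟩
  exact ⟨m, c, v, hc, fun i => h (hv i), rfl⟩

lemma coneHull_add_mem {S : Set M} {x y : M} (hx : x ∈ coneHull S) (hy : y ∈ coneHull S) :
    x + y ∈ coneHull S := by
  obtain ⟨m, c, v, hc, hv, rfl⟩ := hx
  obtain ⟨m', c', v', hc', hv', rfl⟩ := hy
  refine ⟨m + m', Fin.append c c', Fin.append v v', ?_, ?_, ?_⟩
  · refine Fin.addCases ?_ ?_ <;> intro j <;>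
      simp [Fin.append_left, Fin.append_right, hc, hc']
  · refine Fin.addCases ?_ ?_ <;> intro j <;>
      simp [Fin.append_left, Fin.append_right, hv, hv']
  · rw [Fin.sum_univ_add]
    congr 1 <;> apply Finset.sum_congr rfl <;> intro j _ <;>
      simp [Fin.append_left, Fin.append_right]

lemma coneHull_smul_mem {S : Set M} {c : ℝ} (hc : 0 ≤ c) {x : M} (hx : x ∈ coneHull S) :
    c • x ∈ coneHull S := by
  obtain ⟨m, co, v, hco, hv, rfl⟩ := hx
  refine ⟨m, fun i => c * co i, v, fun i => mul_nonneg hc (hco i), hv, ?_⟩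
  rw [Finset.smul_sum]
  exact Finset.sum_congr rfl fun i _ => (smul_smul c (co i) (v i))

lemma convex_coneHull (S : Set M) : Convex ℝ (coneHull S) := by
  intro x hx y hy a b ha hb _
  exact coneHull_add_mem (coneHull_smul_mem ha hx) (coneHull_smul_mem hb hy)

lemma coneHull_nonneg {S : Set M} {f : M → ℝ} (hf : IsLinearMap ℝ f)
    (h : ∀ s ∈ S, 0 ≤ f s) {x : M} (hx : x ∈ coneHull S) : 0 ≤ f x := by
  obtain ⟨m, c, v, hc, hv, rfl⟩ := hx
  rw [hf.apply_sum_smul]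
  exact Finset.sum_nonneg fun i _ => mul_nonneg (hc i) (h _ (hv i))

lemma coneHull_eq_zero {S : Set M} {f : M → ℝ} (hf : IsLinearMap ℝ f)
    (h0 : ∀ s ∈ S, 0 ≤ f s) (hpos : ∀ s ∈ S, f s = 0 → s = 0)
    {x : M} (hx : x ∈ coneHull S) (hfx : f x = 0) : x = 0 := by
  obtain ⟨m, c, v, hc, hv, rfl⟩ := hx
  rw [hf.apply_sum_smul] at hfx
  have hterm : ∀ i ∈ Finset.univ, c i * f (v i) = 0 :=
    (Finset.sum_eq_zero_iff_of_nonneg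
      (fun i _ => mul_nonneg (hc i) (h0 _ (hv i)))).1 hfx
  apply Finset.sum_eq_zero
  intro i _
  rcases mul_eq_zero.1 (hterm i (Finset.mem_univ i)) with hci | hfi
  · rw [hci, zero_smul]
  · rw [hpos _ (hv i) hfi, smul_zero]

end ConeHull
section SetSums

variable {M : Type*} [AddCommGroup M] [Module ℝ M] {ι : Type*} [DecidableEq ι]

lemma mem_finsetSum_sets {s : Finset ι} {S : ι → Set M} {x : M} :
    x ∈ (∑ i ∈ s, S i) ↔ ∃ f : ι → M, (∀ i ∈ s, f i ∈ S i) ∧ x = ∑ i ∈ s, f i := by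
  classical
  induction s using Finset.induction generalizing x with
  | empty => simp [eq_comm, Set.mem_zero]
  | @insert a s ha ih =>
    rw [Finset.sum_insert ha, Set.mem_add]
    constructor
    · rintro ⟨y, hy, z, hz, rfl⟩
      obtain ⟨f, hf, rfl⟩ := ih.mp hz
      refine ⟨Function.update f a y, ?_, ?_⟩
      · intro i hi
        rcases Finset.mem_insert.1 hi with rfl | hi
        · simpa using hy
        · rw [Function.update_of_ne (by intro h; exact ha (h ▸ hi))]; exact hf i hi
      · rw [Finset.sum_insert ha, Function.update_self]
        congr 1
        exact (Finset.sum_congr rfl fun i hi => by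
          rw [Function.update_of_ne (by intro h; exact ha (h ▸ hi))])
    · rintro ⟨f, hf, rfl⟩
      rw [Finset.sum_insert ha]
      exact ⟨f a, hf a (Finset.mem_insert_self a s), ∑ i ∈ s, f i,
        ih.mpr ⟨f, fun i hi => hf i (Finset.mem_insert_of_mem hi), rfl⟩, rfl⟩

lemma convexHull_finsetSum (s : Finset ι) (S : ι → Set M) :
    convexHull ℝ (∑ i ∈ s, S i) = ∑ i ∈ s, convexHull ℝ (S i) := by
  classical
  induction s using Finset.induction with
  | empty => simp [show (0 : Set M) = {0} from rfl]
  | @insert a s ha ih => rw [Finset.sum_insert ha, Finset.sum_insert ha, convexHull_add, ih]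

lemma convex_finsetSum (s : Finset ι) {S : ι → Set M} (h : ∀ i ∈ s, Convex ℝ (S i)) :
    Convex ℝ (∑ i ∈ s, S i) := by
  classical
  induction s using Finset.induction with
  | empty => simp only [Finset.sum_empty, show (0 : Set M) = {0} from rfl]; exact convex_singleton 0
  | @insert a s ha ih =>
    rw [Finset.sum_insert ha]
    exact (h a (Finset.mem_insert_self a s)).add
      (ih fun i hi => h i (Finset.mem_insert_of_mem hi))

omit [Module ℝ M] in
lemma finite_finsetSum {s : Finset ι} {S : ι → Set M} (h : ∀ i ∈ s, (S i).Finite) :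
    (∑ i ∈ s, S i).Finite := by
  classical
  induction s using Finset.induction with
  | empty => simp [show (0 : Set M) = {0} from rfl]
  | @insert a s ha ih =>
    rw [Finset.sum_insert ha]
    exact (h a (Finset.mem_insert_self a s)).add
      (ih fun i hi => h i (Finset.mem_insert_of_mem hi))

end SetSums

section ConeHullFinset

variable {M : Type*} [AddCommGroup M] [Module ℝ M]

lemma mem_coneHull_finset {T : Finset M} {x : M} :
    x ∈ coneHull (T : Set M) ↔ ∃ c : M → ℝ, (∀ v, 0 ≤ c v) ∧ x = ∑ v ∈ T, c v • v := by
  classical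
  constructor
  · rintro ⟨m, co, v, hco, hv, rfl⟩
    refine ⟨fun w => ∑ i ∈ Finset.univ.filter (fun i => v i = w), co i,
      fun w => Finset.sum_nonneg fun i _ => hco i, ?_⟩
    rw [← Finset.sum_fiberwise_of_maps_to (fun i _ => by simpa using hv i)
      (fun i => co i • v i)]
    exact Finset.sum_congr rfl fun w _ => by
      rw [Finset.sum_smul]
      exact Finset.sum_congr rfl fun i hi => by
        rw [(Finset.mem_filter.1 hi).2]
  · rintro ⟨c, hc, rfl⟩
    refine ⟨T.card, fun i => c ((T.equivFin.symm i : T) : M),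
      fun i => ((T.equivFin.symm i : T) : M), fun i => hc _,
      fun i => (T.equivFin.symm i).2, ?_⟩
    calc ∑ v ∈ T, c v • v
        = ∑ t : T, c (t : M) • (t : M) := (Finset.sum_coe_sort T fun v => c v • v).symm
      _ = ∑ i : Fin T.card, c ((T.equivFin.symm i : T) : M) • ((T.equivFin.symm i : T) : M) :=
          (Equiv.sum_comp T.equivFin.symm fun t : T => c (t : M) • (t : M)).symm

end ConeHullFinset
section Closedness

variable {M : Type*} [NormedAddCommGroup M] [NormedSpace ℝ M] [FiniteDimensional ℝ M]

lemma coneHull_caratheodory (T : Finset M) :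
    ∀ c : M → ℝ, (∀ v, 0 ≤ c v) →
    ∃ T' : Finset M, T' ⊆ T ∧ (LinearIndependent ℝ (fun t : T' => (t : M))) ∧
      (∑ v ∈ T, c v • v) ∈ coneHull (T' : Set M) := by
  classical
  induction T using Finset.strongInduction with
  | _ T ih =>
  intro c hc
  by_cases hli : LinearIndependent ℝ (fun t : T => (t : M))
  · exact ⟨T, Finset.Subset.refl T, hli, mem_coneHull_finset.mpr ⟨c, hc, rfl⟩⟩
  · have key : ∀ G : M → ℝ, (∑ w ∈ T, G w • w) = 0 → (∃ w ∈ T, 0 < G w) →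
        ∃ T' : Finset M, T' ⊆ T ∧ (LinearIndependent ℝ (fun t : T' => (t : M))) ∧
          (∑ v ∈ T, c v • v) ∈ coneHull (T' : Set M) := by
      rintro G hG0 ⟨w₁, hw₁T, hw₁⟩
      set s := T.filter (fun w => 0 < G w) with hs_def
      have hs : s.Nonempty := ⟨w₁, Finset.mem_filter.mpr ⟨hw₁T, hw₁⟩⟩
      obtain ⟨wm, hwms, hwm⟩ := s.exists_mem_eq_inf' hs (fun w => c w / G w)
      set t := s.inf' hs (fun w => c w / G w) with ht_def
      have hwmT : wm ∈ T := (Finset.mem_filter.1 hwms).1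
      have hGwm : 0 < G wm := (Finset.mem_filter.1 hwms).2
      have ht0 : 0 ≤ t := by rw [hwm]; exact div_nonneg (hc wm) hGwm.le
      set c' : M → ℝ := fun w => if w ∈ T.erase wm then c w - t * G w else 0 with hc'_def
      have hc' : ∀ v, 0 ≤ c' v := by
        intro v
        rw [hc'_def]
        dsimp only
        split_ifs with hv
        · have hvT : v ∈ T := Finset.mem_of_mem_erase hv
          rcases lt_or_ge 0 (G v) with hGv | hGv
          · have hvs : v ∈ s := Finset.mem_filter.mpr ⟨hvT, hGv⟩
            have : t ≤ c v / G v := Finset.inf'_le _ hvs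
            have := (le_div_iff₀ hGv).1 this
            linarith
          · nlinarith [hc v]
        · exact le_refl 0
      have hzero : c wm - t * G wm = 0 := by
        rw [hwm, div_mul_cancel₀ _ (ne_of_gt hGwm)]
        ring
      have hsum : ∑ v ∈ T.erase wm, c' v • v = ∑ v ∈ T, c v • v := by
        have e1 : ∑ v ∈ T.erase wm, c' v • v = ∑ v ∈ T.erase wm, (c v - t * G v) • v :=
          Finset.sum_congr rfl fun v hv => by rw [hc'_def]; simp only [if_pos hv]
        have e2 : ∑ v ∈ T.erase wm, (c v - t * G v) • v = ∑ v ∈ T, (c v - t * G v) • v :=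
          Finset.sum_erase _ (by rw [hzero, zero_smul])
        have e3 : ∑ v ∈ T, (c v - t * G v) • v
            = ∑ v ∈ T, c v • v - t • ∑ v ∈ T, G v • v := by
          rw [Finset.smul_sum, ← Finset.sum_sub_distrib]
          exact Finset.sum_congr rfl fun v _ => by
            rw [sub_smul, smul_smul]
        rw [e1, e2, e3, hG0, smul_zero, sub_zero]
      obtain ⟨T', hT'sub, hT'li, hmem⟩ := ih (T.erase wm) (Finset.erase_ssubset hwmT) c' hc'
      rw [hsum] at hmem
      exact ⟨T', hT'sub.trans (Finset.erase_subset _ _), hT'li, hmem⟩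
    obtain ⟨g, hg0, i₀, hi₀⟩ := Fintype.not_linearIndependent_iff.mp hli
    set G : M → ℝ := fun w => if h : w ∈ T then g ⟨w, h⟩ else 0 with hG_def
    have hGsum : ∑ w ∈ T, G w • w = 0 := by
      rw [← Finset.sum_coe_sort T (fun w => G w • w)]
      rw [← hg0]
      exact Finset.sum_congr rfl fun i _ => by
        rw [hG_def]; simp only [Finset.coe_mem, dif_pos]
    have hGi₀ : G (i₀ : M) ≠ 0 := by
      rw [hG_def]; simpa only [Finset.coe_mem, dif_pos, Subtype.coe_eta] using hi₀
    rcases hGi₀.lt_or_gt with hneg | hpos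
    · have hGsum' : ∑ w ∈ T, (-G) w • w = 0 := by
        simp only [Pi.neg_apply, neg_smul, Finset.sum_neg_distrib, hGsum, neg_zero]
      exact key (-G) hGsum' ⟨i₀, i₀.2, by simpa using hneg⟩
    · exact key G hGsum ⟨i₀, i₀.2, hpos⟩

lemma isClosed_coneHull_indep (T : Finset M)
    (hli : LinearIndependent ℝ (fun t : T => (t : M))) :
    IsClosed (coneHull (T : Set M)) := by
  classical
  let ψ : (T → ℝ) →ₗ[ℝ] M :=
    { toFun := fun c => ∑ t : T, c t • (t : M)
      map_add' := fun a b => by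
        simp only [Pi.add_apply, add_smul, Finset.sum_add_distrib]
      map_smul' := fun r a => by
        simp only [Pi.smul_apply, smul_eq_mul, RingHom.id_apply, Finset.smul_sum, smul_smul] }
  have hker : LinearMap.ker ψ = ⊥ := by
    rw [LinearMap.ker_eq_bot']
    intro c hcz
    funext t
    exact Fintype.linearIndependent_iff.mp hli c hcz t
  have hce := LinearMap.isClosedEmbedding_of_injective hker (f := ψ)
  have himg : coneHull (T : Set M) = ψ '' {c | ∀ t, 0 ≤ c t} := by
    ext x
    constructor
    · intro hx
      obtain ⟨c, hc, rfl⟩ := mem_coneHull_finset.mp hx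
      refine ⟨fun t => c (t : M), fun t => hc _, ?_⟩
      show ∑ t : T, c (t : M) • (t : M) = _
      rw [Finset.sum_coe_sort T (fun v => c v • v)]
    · rintro ⟨c, hcpos, rfl⟩
      apply mem_coneHull_finset.mpr
      refine ⟨fun w => if h : w ∈ T then c ⟨w, h⟩ else 0,
        fun w => by dsimp only; split_ifs with h; exacts [hcpos _, le_refl 0], ?_⟩
      show (ψ c : M) = _
      rw [← Finset.sum_coe_sort T (fun v => (if h : v ∈ T then c ⟨v, h⟩ else 0) • v)]
      exact Finset.sum_congr rfl fun t _ => by simp only [Finset.coe_mem, dif_pos]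
  rw [himg]
  refine hce.isClosedMap _ ?_
  have : {c : T → ℝ | ∀ t, 0 ≤ c t} = ⋂ t, {c : T → ℝ | 0 ≤ c t} := by
    ext c; simp [Set.mem_iInter]
  rw [this]
  exact isClosed_iInter fun t => isClosed_le continuous_const (continuous_apply t)

lemma isClosed_coneHull_finite {S : Set M} (hS : S.Finite) : IsClosed (coneHull S) := by
  classical
  obtain ⟨SF, rfl⟩ : ∃ SF : Finset M, (SF : Set M) = S := ⟨hS.toFinset, hS.coe_toFinset⟩
  have hun : coneHull (SF : Set M) =
      ⋃ T ∈ {T : Finset M | T ⊆ SF ∧ LinearIndependent ℝ (fun t : T => (t : M))},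
        coneHull (T : Set M) := by
    apply Set.Subset.antisymm
    · intro x hx
      obtain ⟨c, hc, rfl⟩ := mem_coneHull_finset.mp hx
      obtain ⟨T', h1, h2, h3⟩ := coneHull_caratheodory SF c hc
      exact Set.mem_biUnion ⟨h1, h2⟩ h3
    · exact Set.iUnion₂_subset fun T hT => coneHull_mono (Finset.coe_subset.mpr hT.1)
  rw [hun]
  apply Set.Finite.isClosed_biUnion
  · exact Set.Finite.subset (SF.powerset.finite_toSet)
      (fun T hT => by simpa [Finset.mem_powerset] using hT.1)
  · exact fun T hT => isClosed_coneHull_indep T hT.2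
end Closedness
section Polytope

lemma dot_comb {n : ℕ} (a b : Fin n → ℝ) (θ₁ θ₂ : ℝ) (h : θ₁ + θ₂ = 1) :
    dot (θ₁ • a + θ₂ • b) (θ₁ • a + θ₂ • b)
      = θ₁ * dot a a + θ₂ * dot b b - θ₁ * θ₂ * dot (a - b) (a - b) := by
  have hθ : θ₂ = 1 - θ₁ := by linarith
  subst hθ
  simp only [dot, Pi.add_apply, Pi.smul_apply, Pi.sub_apply, smul_eq_mul,
    Finset.mul_sum, ← Finset.sum_sub_distrib, ← Finset.sum_add_distrib]
  exact Finset.sum_congr rfl fun j _ => by ring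

lemma exists_extremePoint_of_finite {n : ℕ} {T : Set (Fin n → ℝ)} (hfin : T.Finite)
    (hne : T.Nonempty) : ∃ x ∈ T, x ∈ Set.extremePoints ℝ (convexHull ℝ T) := by
  classical
  obtain ⟨x, hxT, hmax⟩ := hfin.toFinset.exists_max_image (fun v => dot v v)
    (by simpa using hne)
  rw [Set.Finite.mem_toFinset] at hxT
  refine ⟨x, hxT, ?_⟩
  have hbound : ∀ y ∈ convexHull ℝ T, dot y y ≤ dot x x := by
    intro y hy
    have hsub : convexHull ℝ T ⊆ {y | dot y y ≤ dot x x} := by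
      apply convexHull_min
      · intro v hv; exact hmax v (hfin.mem_toFinset.mpr hv)
      · intro a ha b hb θ₁ θ₂ h1 h2 hsum
        simp only [Set.mem_setOf_eq] at ha hb ⊢
        rw [dot_comb a b θ₁ θ₂ hsum]
        have hM : θ₁ * dot x x + θ₂ * dot x x = dot x x := by rw [← add_mul, hsum, one_mul]
        nlinarith [mul_nonneg (mul_nonneg h1 h2) (dot_self_nonneg (a - b)),
          mul_le_mul_of_nonneg_left ha h1, mul_le_mul_of_nonneg_left hb h2]
    exact hsub hy
  rw [mem_extremePoints]
  refine ⟨subset_convexHull ℝ T hxT, ?_⟩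
  intro x₁ hx₁ x₂ hx₂ hseg
  obtain ⟨θ₁, θ₂, h1, h2, hsum, heq⟩ := hseg
  by_cases hne12 : x₁ = x₂
  · subst hne12
    have hx : x₁ = x := by rw [← heq, ← add_smul, hsum, one_smul]
    exact ⟨hx, hx⟩
  · exfalso
    have hdd : dot x x = θ₁ * dot x₁ x₁ + θ₂ * dot x₂ x₂
        - θ₁ * θ₂ * dot (x₁ - x₂) (x₁ - x₂) := by
      rw [← heq, dot_comb _ _ _ _ hsum]
    have hpos : 0 < dot (x₁ - x₂) (x₁ - x₂) :=
      (dot_self_nonneg _).lt_of_ne fun h => hne12 (sub_eq_zero.mp (dot_self_eq_zero h.symm))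
    have hM : θ₁ * dot x x + θ₂ * dot x x = dot x x := by rw [← add_mul, hsum, one_mul]
    nlinarith [mul_pos (mul_pos h1 h2) hpos,
      mul_le_mul_of_nonneg_left (hbound x₁ hx₁) h1.le,
      mul_le_mul_of_nonneg_left (hbound x₂ hx₂) h2.le]

end Polytope
section DD

variable {n k : ℕ} (D : DeformationDatum n k)

lemma DD.Qi_nonempty (i : Fin (k + 1)) : (D.Qi i).Nonempty := by
  obtain ⟨v, hv⟩ := D.hVne i
  refine ⟨v, ?_⟩
  rw [D.hQi i]
  exact ⟨v, subset_convexHull ℝ _ (by exact_mod_cast hv), 0, zero_mem_coneHull _, add_zero v⟩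

lemma DD.Q_nonempty : D.Q.Nonempty := by
  have hf : ∀ i, ∃ x, x ∈ D.Qi i := fun i => DD.Qi_nonempty D i
  choose f hf using hf
  exact ⟨∑ i, f i, by rw [D.h3]; exact mem_finsetSum_sets.mpr ⟨f, fun i _ => hf i, rfl⟩⟩

lemma DD.Qi_add_cone (i : Fin (k + 1)) {x s : Fin n → ℝ} (hx : x ∈ D.Qi i)
    (hs : s ∈ coneHull (D.R i : Set (Fin n → ℝ))) : x + s ∈ D.Qi i := by
  rw [D.hQi i] at hx ⊢
  obtain ⟨c, hc, s₀, hs₀, rfl⟩ := hx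
  exact ⟨c, hc, s₀ + s, coneHull_add_mem hs₀ hs, (add_assoc c s₀ s).symm⟩

lemma DD.Q_add_cone (i : Fin (k + 1)) {q s : Fin n → ℝ} (hq : q ∈ D.Q)
    (hs : s ∈ coneHull (D.R i : Set (Fin n → ℝ))) : q + s ∈ D.Q := by
  classical
  rw [D.h3] at hq ⊢
  obtain ⟨f, hf, rfl⟩ := mem_finsetSum_sets.mp hq
  refine mem_finsetSum_sets.mpr ⟨fun j => f j + (if j = i then s else 0), ?_, ?_⟩
  · intro j _
    dsimp only
    by_cases hj : j = i
    · subst hj; rw [if_pos rfl]; exact DD.Qi_add_cone D j (hf j (Finset.mem_univ j)) hs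
    · rw [if_neg hj, add_zero]; exact hf j (Finset.mem_univ j)
  · rw [Finset.sum_add_distrib, Finset.sum_ite_eq' Finset.univ i (fun _ => s)]
    simp

variable {u : Fin n → ℝ}

lemma DD.u_nonneg_R (hu : ∀ x ∈ D.σ, 0 ≤ dot u x) (i : Fin (k + 1)) :
    ∀ r ∈ (D.R i : Set (Fin n → ℝ)), 0 ≤ dot u r := by
  intro r hr
  obtain ⟨q₀, hq₀⟩ := DD.Q_nonempty D
  have hq₀0 : 0 ≤ dot u q₀ := hu q₀ (D.h1 hq₀)
  by_contra hneg
  push_neg at hneg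
  set t := (dot u q₀ + 1) / (-dot u r) with ht_def
  have ht0 : 0 ≤ t := div_nonneg (by linarith) (by linarith)
  have hmem : q₀ + t • r ∈ D.Q :=
    DD.Q_add_cone D i hq₀ (coneHull_smul_mem ht0 (subset_coneHull _ hr))
  have h0 : 0 ≤ dot u (q₀ + t • r) := hu _ (D.h1 hmem)
  rw [dot_add_right, dot_smul_right] at h0
  have htr : t * dot u r = -(dot u q₀ + 1) := by
    have h := div_mul_cancel₀ (dot u q₀ + 1) (show -dot u r ≠ 0 by linarith)
    calc t * dot u r = -((dot u q₀ + 1) / (-dot u r) * (-dot u r)) := by rw [ht_def]; ring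
    _ = -(dot u q₀ + 1) := by rw [h]
  linarith

lemma DD.u_nonneg_coneR (hu : ∀ x ∈ D.σ, 0 ≤ dot u x) (i : Fin (k + 1)) :
    ∀ s ∈ coneHull (D.R i : Set (Fin n → ℝ)), 0 ≤ dot u s := fun s hs =>
  coneHull_nonneg (isLinearMap_dot u) (DD.u_nonneg_R D hu i) hs

lemma conv_lower {n : ℕ} {f : (Fin n → ℝ) → ℝ} (hf : IsLinearMap ℝ f)
    (W : Finset (Fin n → ℝ)) (hW : W.Nonempty) :
    ∀ c ∈ convexHull ℝ (W : Set (Fin n → ℝ)), W.inf' hW f ≤ f c := by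
  intro c hc
  have hsub : convexHull ℝ (W : Set (Fin n → ℝ)) ⊆ {x | W.inf' hW f ≤ f x} :=
    convexHull_min (fun v hv => Finset.inf'_le f (by exact_mod_cast hv))
      (convex_halfSpace_ge hf _)
  exact hsub hc

lemma DD.isLeast_Qi (hu : ∀ x ∈ D.σ, 0 ≤ dot u x) (i : Fin (k + 1)) :
    IsLeast ((fun x => dot u x) '' D.Qi i) ((D.V i).inf' (D.hVne i) (dot u)) := by
  constructor
  · obtain ⟨v, hv, hveq⟩ := (D.V i).exists_mem_eq_inf' (D.hVne i) (dot u)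
    have hvQ : v ∈ D.Qi i := by
      rw [D.hQi i]
      exact ⟨v, subset_convexHull ℝ _ (by exact_mod_cast hv), 0, zero_mem_coneHull _, add_zero v⟩
    exact ⟨v, hvQ, hveq.symm⟩
  · rintro y ⟨x, hx, rfl⟩
    rw [D.hQi i] at hx
    obtain ⟨c, hc, s, hs, rfl⟩ := hx
    have h1 := conv_lower (isLinearMap_dot u) (D.V i) (D.hVne i) c hc
    have h2 := DD.u_nonneg_coneR D hu i s hs
    show (D.V i).inf' (D.hVne i) (dot u) ≤ dot u (c + s)
    rw [dot_add_right]
    linarith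

end DD
section Key

variable {n k : ℕ}

lemma DD.sep_functional (D : DeformationDatum n k) :
    ∃ f : (Fin n → ℝ) →L[ℝ] ℝ, ∀ i : Fin (k + 1), ∀ r ∈ D.R i, r ≠ 0 → 0 < f r := by
  classical
  set R' : Set (Fin n → ℝ) := (⋃ i, (D.R i : Set (Fin n → ℝ))) \ {0} with hR'def
  have hR'fin : R'.Finite := (Set.finite_iUnion fun i => (D.R i).finite_toSet).diff
  obtain ⟨q₀, hq₀⟩ := DD.Q_nonempty D
  have hσclosed : IsClosed D.σ := by
    rw [D.hσ]; exact isClosed_coneHull_finite (D.S₀.finite_toSet)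
  have hQadd : ∀ {ι : Type} [Fintype ι] (s : Finset ι) (d : ι → ℝ) (z : ι → (Fin n → ℝ)),
      (∀ j, 0 ≤ d j) → (∀ j, z j ∈ ⋃ i, (D.R i : Set (Fin n → ℝ))) →
      ∀ q ∈ D.Q, q + ∑ j ∈ s, d j • z j ∈ D.Q := by
    intro ι _ s d z hd hz
    induction s using Finset.induction with
    | empty => intro q hq; simpa using hq
    | @insert a s ha ih =>
      intro q hq
      obtain ⟨i, hi⟩ := Set.mem_iUnion.mp (hz a)
      rw [Finset.sum_insert ha, ← add_assoc]
      exact ih (q + d a • z a)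
        (DD.Q_add_cone D i hq (coneHull_smul_mem (hd a) (subset_coneHull _ hi)))
  have hσ_smul : ∀ (c : ℝ), 0 ≤ c → ∀ x ∈ D.σ, c • x ∈ D.σ := by
    intro c hc x hx
    rw [D.hσ] at hx ⊢
    exact coneHull_smul_mem hc hx
  have hR'0 : (0 : Fin n → ℝ) ∉ convexHull ℝ R' := by
    intro h0
    rw [mem_convexHull_iff_exists_fintype] at h0
    obtain ⟨ι, hι, w, z, hw0, hw1, hzR, hsum⟩ := h0
    have hex : ∃ i₀, 0 < w i₀ := by
      by_contra hno
      push_neg at hno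
      have : ∑ i, w i = 0 := Finset.sum_eq_zero fun i _ => le_antisymm (hno i) (hw0 i)
      rw [hw1] at this; exact one_ne_zero this
    obtain ⟨i₀, hi₀⟩ := hex
    set ξ := w i₀ • z i₀ with hξdef
    have hz0 : z i₀ ≠ 0 := fun h => (hzR i₀).2 (by simp [h])
    have hξ0 : ξ ≠ 0 := smul_ne_zero (ne_of_gt hi₀) hz0
    have hzU : ∀ j, z j ∈ ⋃ i, (D.R i : Set (Fin n → ℝ)) := fun j => (hzR j).1
    -- forward ray
    have hfwd : ∀ t : ℝ, 0 ≤ t → q₀ + t • ξ ∈ D.Q := by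
      intro t ht
      have := hQadd {i₀} (fun _ => t * w i₀) z
        (fun _ => mul_nonneg ht hi₀.le) hzU q₀ hq₀
      simpa [hξdef, smul_smul] using this
    -- backward ray
    have hbwd : ∀ t : ℝ, 0 ≤ t → q₀ + t • (-ξ) ∈ D.Q := by
      intro t ht
      have herase : ∑ j ∈ Finset.univ.erase i₀, w j • z j = -ξ := by
        have := Finset.add_sum_erase Finset.univ (fun j => w j • z j) (Finset.mem_univ i₀)
        rw [hsum] at this
        rw [hξdef]
        have h2 : w i₀ • z i₀ + ∑ x ∈ Finset.univ.erase i₀, w x • z x = 0 := this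
        exact eq_neg_of_add_eq_zero_right h2
      have := hQadd (Finset.univ.erase i₀) (fun j => t * w j) z
        (fun j => mul_nonneg ht (hw0 j)) hzU q₀ hq₀
      have heq : ∑ j ∈ Finset.univ.erase i₀, (t * w j) • z j = t • (-ξ) := by
        rw [← herase, Finset.smul_sum]
        exact Finset.sum_congr rfl fun j _ => (smul_smul t (w j) (z j)).symm
      rwa [heq] at this
    -- limits
    have hmem : ∀ (sgn : Fin n → ℝ), (∀ t : ℝ, 0 ≤ t → q₀ + t • sgn ∈ D.Q) → sgn ∈ D.σ := by
      intro sgn hray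
      have hseq : ∀ m : ℕ, ((1 : ℝ) / (m + 1)) • q₀ + sgn ∈ D.σ := by
        intro m
        have hm1 : (0 : ℝ) < (m : ℝ) + 1 := by positivity
        have h1 : q₀ + ((m : ℝ) + 1) • sgn ∈ D.σ := D.h1 (hray _ hm1.le)
        have h2 := hσ_smul ((1 : ℝ) / (m + 1)) (by positivity) _ h1
        have heq : ((1 : ℝ) / (m + 1)) • (q₀ + ((m : ℝ) + 1) • sgn)
            = ((1 : ℝ) / (m + 1)) • q₀ + sgn := by
          rw [smul_add, smul_smul, one_div, inv_mul_cancel₀ (ne_of_gt hm1), one_smul]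
        rwa [heq] at h2
      have htend : Filter.Tendsto (fun m : ℕ => ((1 : ℝ) / (m + 1)) • q₀ + sgn)
          Filter.atTop (nhds sgn) := by
        have h1 : Filter.Tendsto (fun m : ℕ => ((1 : ℝ) / (m + 1)) • q₀)
            Filter.atTop (nhds ((0 : ℝ) • q₀)) :=
          tendsto_one_div_add_atTop_nhds_zero_nat.smul_const q₀
        rw [zero_smul] at h1
        simpa using h1.add (tendsto_const_nhds (x := sgn))
      exact hσclosed.mem_of_tendsto htend (Filter.Eventually.of_forall hseq)
    have hξσ : ξ ∈ D.σ := hmem ξ hfwd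
    have hnξσ : -ξ ∈ D.σ := hmem (-ξ) hbwd
    have : ξ ∈ D.σ ∩ (-D.σ) := ⟨hξσ, by rwa [Set.mem_neg]⟩
    rw [D.hsc] at this
    exact hξ0 this
  obtain ⟨f, sep, hsep1, hsep2⟩ := geometric_hahn_banach_point_closed
    (convex_convexHull ℝ R') (hR'fin.isClosed_convexHull (𝕜 := ℝ)) hR'0
  refine ⟨f, fun i r hr hr0 => ?_⟩
  have hrR' : r ∈ R' := ⟨Set.mem_iUnion.mpr ⟨i, by exact_mod_cast hr⟩, hr0⟩
  have h1 : sep < f r := hsep2 r (subset_convexHull ℝ R' hrR')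
  have h2 : f 0 = 0 := map_zero f
  rw [h2] at hsep1
  linarith

end Key
section KeyMain

variable {n k : ℕ}

set_option maxHeartbeats 2000000 in
lemma DD.key (D : DeformationDatum n k) {u : Fin n → ℝ}
    (hu : ∀ x ∈ D.σ, 0 ≤ dot u x)
    (μ : Fin (k + 1) → ℝ) (hμ : ∀ i, IsLeast ((fun x => dot u x) '' D.Qi i) (μ i)) :
    0 ≤ ∑ i, μ i ∧ ∃ vi : Fin (k + 1) → (Fin n → ℝ),
      (∀ i, dot u (vi i) = μ i) ∧
      ({i | ¬ IsIntegralVec (vi i)} : Set (Fin (k + 1))).Subsingleton := by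
  classical
  obtain ⟨f, hf⟩ := DD.sep_functional D
  have hμeq : ∀ i, μ i = (D.V i).inf' (D.hVne i) (dot u) :=
    fun i => (hμ i).unique (DD.isLeast_Qi D hu i)
  have hμle : ∀ i, ∀ x ∈ D.Qi i, μ i ≤ dot u x := fun i x hx => (hμ i).2 ⟨x, hx, rfl⟩
  have hVQi : ∀ i, ∀ v ∈ D.V i, v ∈ D.Qi i := by
    intro i v hv
    rw [D.hQi i]
    exact ⟨v, subset_convexHull ℝ _ (by exact_mod_cast hv), 0, zero_mem_coneHull _, add_zero v⟩
  -- bound B on |f| over all vertices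
  set VA : Finset (Fin n → ℝ) := Finset.univ.biUnion D.V with hVA
  have hVAne : VA.Nonempty := by
    obtain ⟨v, hv⟩ := D.hVne 0
    exact ⟨v, Finset.mem_biUnion.mpr ⟨0, Finset.mem_univ 0, hv⟩⟩
  set B : ℝ := VA.sup' hVAne (fun v => |f v|) + 1 with hBdef
  have hBpos : 0 < B := by
    have h0 : (0:ℝ) ≤ VA.sup' hVAne (fun v => |f v|) := by
      obtain ⟨v, hv⟩ := hVAne
      exact le_trans (abs_nonneg (f v)) (Finset.le_sup' (fun v => |f v|) hv)
    linarith
  have hB : ∀ i, ∀ v ∈ D.V i, |f v| ≤ B - 1 := by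
    intro i v hv
    have hm : v ∈ VA := Finset.mem_biUnion.mpr ⟨i, Finset.mem_univ i, hv⟩
    have := Finset.le_sup' (fun v => |f v|) hm
    rw [hBdef]; linarith
  -- gap δ
  set bad : Finset ((_ : Fin (k+1)) × (Fin n → ℝ)) :=
    (Finset.univ.sigma D.V).filter (fun p => μ p.1 < dot u p.2) with hbaddef
  set δ : ℝ := if hbad : bad.Nonempty then bad.inf' hbad (fun p => dot u p.2 - μ p.1) else 1
    with hδdef
  have hδpos : 0 < δ := by
    rw [hδdef]
    split_ifs with hbad
    · obtain ⟨p, hp, hpe⟩ := bad.exists_mem_eq_inf' hbad (fun p => dot u p.2 - μ p.1)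
      rw [hpe]
      have := (Finset.mem_filter.1 hp).2
      linarith
    · exact one_pos
  have hδle : ∀ i, ∀ v ∈ D.V i, μ i < dot u v → δ ≤ dot u v - μ i := by
    intro i v hv hlt
    have hmem : (⟨i, v⟩ : (_ : Fin (k+1)) × (Fin n → ℝ)) ∈ bad :=
      Finset.mem_filter.mpr ⟨Finset.mem_sigma.mpr ⟨Finset.mem_univ i, hv⟩, hlt⟩
    have hbad : bad.Nonempty := ⟨_, hmem⟩
    rw [hδdef, dif_pos hbad]
    exact Finset.inf'_le _ hmem
  set ε : ℝ := δ / (2 * B + 1) with hεdef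
  have hεpos : 0 < ε := div_pos hδpos (by linarith)
  have hεB : ε * (2 * B + 1) = δ := div_mul_cancel₀ δ (by positivity)
  -- perturbed functional u'
  set u' : (Fin n → ℝ) →L[ℝ] ℝ :=
    LinearMap.toContinuousLinearMap (IsLinearMap.mk' (dot u) (isLinearMap_dot u)) + ε • f
    with hu'def
  have hu'x : ∀ x, u' x = dot u x + ε * f x := by
    intro x
    rw [hu'def]
    simp [LinearMap.coe_toContinuousLinearMap']
  have hu'lin : IsLinearMap ℝ (fun x => u' x) := ⟨map_add u', map_smul u'⟩
  have hu'R : ∀ i, ∀ r ∈ (D.R i : Set (Fin n → ℝ)), 0 ≤ u' r := by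
    intro i r hr
    rw [hu'x]
    by_cases hr0 : r = 0
    · simp [hr0, dot_zero_right]
    · have h1 := DD.u_nonneg_R D hu i r hr
      have h2 := hf i r (by exact_mod_cast hr) hr0
      nlinarith
  have hu'R0 : ∀ i, ∀ r ∈ (D.R i : Set (Fin n → ℝ)), u' r = 0 → r = 0 := by
    intro i r hr h0
    by_contra hr0
    have h1 := DD.u_nonneg_R D hu i r hr
    have h2 := hf i r (by exact_mod_cast hr) hr0
    rw [hu'x] at h0
    nlinarith
  have hu'cone : ∀ i, ∀ s ∈ coneHull (D.R i : Set (Fin n → ℝ)), 0 ≤ u' s :=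
    fun i s hs => coneHull_nonneg hu'lin (hu'R i) hs
  have hu'cone0 : ∀ i, ∀ s ∈ coneHull (D.R i : Set (Fin n → ℝ)), u' s = 0 → s = 0 :=
    fun i s hs h0 => coneHull_eq_zero hu'lin (hu'R i) (hu'R0 i) hs h0
  -- minima of u' on vertex sets
  set ν : Fin (k+1) → ℝ := fun i => (D.V i).inf' (D.hVne i) (fun v => u' v) with hνdef
  set V'' : Fin (k+1) → Finset (Fin n → ℝ) :=
    fun i => (D.V i).filter (fun v => u' v = ν i) with hV''def
  have hV''ne : ∀ i, (V'' i).Nonempty := by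
    intro i
    obtain ⟨v, hv, hve⟩ := (D.V i).exists_mem_eq_inf' (D.hVne i) (fun v => u' v)
    exact ⟨v, Finset.mem_filter.mpr ⟨hv, hve.symm⟩⟩
  have hV''sub : ∀ i, ∀ v ∈ V'' i, v ∈ D.V i := fun i v hv => (Finset.mem_filter.1 hv).1
  have hV''val : ∀ i, ∀ v ∈ V'' i, u' v = ν i := fun i v hv => (Finset.mem_filter.1 hv).2
  have hνle : ∀ i, ∀ v ∈ D.V i, ν i ≤ u' v := fun i v hv => Finset.inf'_le _ hv
  -- the ε-property: u'-minimizing vertices minimize dot u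
  have hV''min : ∀ i, ∀ v ∈ V'' i, dot u v = μ i := by
    intro i v hv
    have hvV := hV''sub i v hv
    have hge : μ i ≤ dot u v := hμle i v (hVQi i v hvV)
    rcases eq_or_lt_of_le hge with heq | hlt
    · exact heq.symm
    · exfalso
      have hδ1 := hδle i v hvV hlt
      obtain ⟨v₀, hv₀, hv₀e⟩ := (D.V i).exists_mem_eq_inf' (D.hVne i) (dot u)
      have hv₀μ : dot u v₀ = μ i := by rw [hμeq i, hv₀e]
      have hb1 := (abs_le.1 (hB i v hvV)).1
      have hb0 := (abs_le.1 (hB i v₀ hv₀)).2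
      have h1 : ν i ≤ u' v₀ := hνle i v₀ hv₀
      have h2 : u' v = ν i := hV''val i v hv
      rw [hu'x] at h1 h2
      have e1 : ε * f v₀ ≤ ε * (B - 1) := mul_le_mul_of_nonneg_left hb0 hεpos.le
      have e2 : ε * -(B - 1) ≤ ε * f v := mul_le_mul_of_nonneg_left hb1 hεpos.le
      have e3 : 2 * (ε * (B - 1)) < δ := by nlinarith
      have e4 : ε * -(B - 1) = -(ε * (B - 1)) := by ring
      rw [e4] at e2
      linarith
  -- the compact face T
  set T : Set (Fin n → ℝ) := ∑ i : Fin (k+1), ((V'' i : Set (Fin n → ℝ))) with hTdef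
  have hTfin : T.Finite := finite_finsetSum (fun i _ => (V'' i).finite_toSet)
  have hTQ : T ⊆ D.Q := by
    intro t ht
    obtain ⟨g, hg, rfl⟩ := mem_finsetSum_sets.mp ht
    rw [D.h3]
    exact mem_finsetSum_sets.mpr ⟨g, fun i hi => hVQi i _ (hV''sub i _ (hg i hi)), rfl⟩
  set m'' : ℝ := ∑ i, ν i with hm''def
  have hu'sum : ∀ (g : Fin (k+1) → (Fin n → ℝ)), u' (∑ i, g i) = ∑ i, u' (g i) :=
    fun g => map_sum u' g Finset.univ
  have hTval : ∀ t ∈ T, u' t = m'' := by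
    intro t ht
    obtain ⟨g, hg, rfl⟩ := mem_finsetSum_sets.mp ht
    rw [hu'sum]
    exact Finset.sum_congr rfl fun i hi => hV''val i _ (hg i hi)
  have hTne : T.Nonempty := by
    have hne := fun i => hV''ne i
    choose g hg using hne
    exact ⟨∑ i, g i, mem_finsetSum_sets.mpr
      ⟨g, fun i _ => Finset.mem_coe.mpr (hg i), rfl⟩⟩
  have hconvV : ∀ i, ∀ c ∈ convexHull ℝ ((D.V i : Set (Fin n → ℝ))), ν i ≤ u' c :=
    fun i => conv_lower hu'lin (D.V i) (D.hVne i)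
  have hQlow : ∀ x ∈ D.Q, m'' ≤ u' x := by
    intro x hx
    rw [D.h3] at hx
    obtain ⟨g, hg, rfl⟩ := mem_finsetSum_sets.mp hx
    rw [hu'sum, hm''def]
    apply Finset.sum_le_sum
    intro i hi
    have hgi := hg i hi
    rw [D.hQi i] at hgi
    obtain ⟨c, hc, s, hs, hcs⟩ := hgi
    have h1 := hconvV i c hc
    have h2 := hu'cone i s hs
    rw [← hcs, map_add u']
    linarith
  -- the face equals the hull of T
  have hface : ∀ x ∈ D.Q, u' x = m'' → x ∈ convexHull ℝ T := by
    intro x hx hxv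
    rw [D.h3] at hx
    obtain ⟨g, hg, rfl⟩ := mem_finsetSum_sets.mp hx
    have hdec : ∀ i, ∃ cs : (Fin n → ℝ) × (Fin n → ℝ),
        cs.1 ∈ convexHull ℝ ((D.V i : Set (Fin n → ℝ)))
        ∧ cs.2 ∈ coneHull ((D.R i : Set (Fin n → ℝ))) ∧ g i = cs.1 + cs.2 := by
      intro i
      have hgi := hg i (Finset.mem_univ i)
      rw [D.hQi i] at hgi
      obtain ⟨c, hc, s, hs, hcs⟩ := hgi
      exact ⟨(c, s), hc, hs, hcs.symm⟩
    choose cs hc hs hcs using hdec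
    have hle : ∀ i ∈ Finset.univ, ν i ≤ u' (g i) := by
      intro i _
      rw [hcs i, map_add u']
      have h1 := hconvV i _ (hc i)
      have h2 := hu'cone i _ (hs i)
      linarith
    have hsumeq : ∑ i, ν i = ∑ i, u' (g i) := by
      rw [← hu'sum, hxv, hm''def]
    have heach : ∀ i ∈ Finset.univ, ν i = u' (g i) :=
      (Finset.sum_eq_sum_iff_of_le hle).1 hsumeq
    have hkey : ∀ i, u' (cs i).1 = ν i ∧ u' (cs i).2 = 0 := by
      intro i
      have h1 := hconvV i _ (hc i)
      have h2 := hu'cone i _ (hs i)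
      have h3 := heach i (Finset.mem_univ i)
      rw [hcs i, map_add u'] at h3
      constructor <;> linarith
    have hgc : ∀ i, g i = (cs i).1 := fun i => by
      rw [hcs i, hu'cone0 i _ (hs i) (hkey i).2, add_zero]
    have hcV'' : ∀ i, (cs i).1 ∈ convexHull ℝ ((V'' i : Set (Fin n → ℝ))) := by
      intro i
      have hci := hc i
      rw [mem_convexHull_iff_exists_fintype] at hci
      obtain ⟨ι, hι, w, z, hw0, hw1, hz, hzsum⟩ := hci
      have hzV : ∀ j, z j ∈ D.V i := fun j => by exact_mod_cast hz j
      have hu'c : u' (cs i).1 = ∑ j, w j * u' (z j) := by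
        rw [← hzsum, hu'lin.apply_sum_smul]
      have hterm : ∀ j ∈ Finset.univ, w j * (u' (z j) - ν i) = 0 := by
        apply (Finset.sum_eq_zero_iff_of_nonneg
          (fun j _ => mul_nonneg (hw0 j)
            (by have := hνle i (z j) (hzV j); linarith))).1
        have hexp : ∑ j, w j * (u' (z j) - ν i)
            = (∑ j, w j * u' (z j)) - (∑ j, w j) * ν i := by
          rw [Finset.sum_mul, ← Finset.sum_sub_distrib]
          exact Finset.sum_congr rfl fun j _ => by ring
        rw [hexp, hw1, ← hu'c, (hkey i).1, one_mul, sub_self]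
      set z' : ι → (Fin n → ℝ) := fun j => if w j = 0 then (hV''ne i).choose else z j
        with hz'def
      have hz' : ∀ j, z' j ∈ ((V'' i : Set (Fin n → ℝ))) := by
        intro j
        rw [hz'def]
        dsimp only
        split_ifs with hw
        · exact_mod_cast (hV''ne i).choose_spec
        · have h := hterm j (Finset.mem_univ j)
          rcases mul_eq_zero.1 h with h' | h'
          · exact absurd h' hw
          · have : u' (z j) = ν i := by linarith
            exact_mod_cast Finset.mem_filter.mpr ⟨hzV j, this⟩
      apply mem_convexHull_of_exists_fintype w z' hw0 hw1 hz'
      rw [← hzsum]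
      apply Finset.sum_congr rfl
      intro j _
      rw [hz'def]
      dsimp only
      split_ifs with hw
      · rw [hw, zero_smul, zero_smul]
      · rfl
    rw [hTdef, convexHull_finsetSum]
    exact mem_finsetSum_sets.mpr ⟨fun i => (cs i).1, fun i _ => hcV'' i,
      Finset.sum_congr rfl fun i _ => hgc i⟩
  -- Q is convex, the face is convex
  have hQconv : Convex ℝ D.Q := by
    rw [D.h3]
    apply convex_finsetSum
    intro i _
    rw [D.hQi i]
    exact (convex_convexHull ℝ _).add (convex_coneHull _)
  have hFconv : Convex ℝ (D.Q ∩ {x | u' x = m''}) := by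
    apply hQconv.inter
    intro a ha b hb p q hp hq hpq
    simp only [Set.mem_setOf_eq] at ha hb ⊢
    rw [map_add, map_smul, map_smul, ha, hb, smul_eq_mul, smul_eq_mul, ← add_mul, hpq, one_mul]
  have hTF : convexHull ℝ T = D.Q ∩ {x | u' x = m''} := by
    apply Set.Subset.antisymm
    · exact convexHull_min (fun t ht => ⟨hTQ ht, hTval t ht⟩) hFconv
    · intro x hx
      exact hface x hx.1 hx.2
  -- the hull of T is an exposed face of Q
  have hexp : IsExposed ℝ D.Q (convexHull ℝ T) := by
    intro _
    refine ⟨-u', ?_⟩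
    rw [hTF]
    ext x
    simp only [Set.mem_inter_iff, Set.mem_setOf_eq, ContinuousLinearMap.neg_apply,
      neg_le_neg_iff]
    constructor
    · rintro ⟨hxQ, hxv⟩
      exact ⟨hxQ, fun y hy => by rw [hxv]; exact hQlow y hy⟩
    · rintro ⟨hxQ, hmax⟩
      refine ⟨hxQ, le_antisymm ?_ (hQlow x hxQ)⟩
      obtain ⟨t₀, ht₀⟩ := hTne
      have h := hmax t₀ (hTQ ht₀)
      rw [hTval t₀ ht₀] at h
      exact h
  -- extreme point of Q minimizing dot u
  obtain ⟨xs, hxsT, hxsext⟩ := exists_extremePoint_of_finite hTfin hTne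
  have hxsQ : xs ∈ Set.extremePoints ℝ D.Q :=
    (hexp.isExtreme).extremePoints_subset_extremePoints hxsext
  obtain ⟨g, hg, hgx⟩ := mem_finsetSum_sets.mp hxsT
  have hxsval : dot u xs = ∑ i, μ i := by
    rw [hgx, dot_sum_right]
    exact Finset.sum_congr rfl fun i hi => hV''min i _ (hg i hi)
  have hm0 : 0 ≤ ∑ i, μ i := by
    rw [← hxsval]
    exact hu xs (D.h1 (hTQ hxsT))
  obtain ⟨vi, hvi_ext, hvi_sum, hvi_sub⟩ := D.h4' xs hxsQ
  have hvile : ∀ i ∈ Finset.univ, μ i ≤ dot u (vi i) := fun i _ =>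
    hμle i _ (extremePoints_subset (hvi_ext i))
  have hsums : ∑ i, μ i = ∑ i, dot u (vi i) := by
    rw [← hxsval, hvi_sum, dot_sum_right]
  have heqv : ∀ i ∈ Finset.univ, μ i = dot u (vi i) :=
    (Finset.sum_eq_sum_iff_of_le hvile).1 hsums
  exact ⟨hm0, vi, fun i => (heqv i (Finset.mem_univ i)).symm, hvi_sub⟩

end KeyMain
section Final

variable {n k : ℕ}

lemma floor_bound {u : Fin n → ℝ} (hu_int : IsIntegralVec u)
    (μ : Fin (k + 1) → ℝ)
    (hm : 0 ≤ ∑ i, μ i) (vi : Fin (k + 1) → (Fin n → ℝ))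
    (hvi : ∀ i, dot u (vi i) = μ i)
    (hsub : ({i | ¬ IsIntegralVec (vi i)} : Set (Fin (k + 1))).Subsingleton) :
    0 ≤ μ 0 + ∑ i : Fin k, (⌊μ i.succ⌋ : ℝ) := by
  classical
  by_cases hA : ∀ i : Fin k, IsIntegralVec (vi i.succ)
  · have hfl : ∀ i : Fin k, (⌊μ i.succ⌋ : ℝ) = μ i.succ := by
      intro i
      obtain ⟨z, hz⟩ := dot_int hu_int (hA i)
      rw [hvi i.succ] at hz
      rw [hz, Int.floor_intCast]
    rw [Finset.sum_congr rfl fun i _ => hfl i]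
    rw [← Fin.sum_univ_succ μ]
    exact hm
  · push_neg at hA
    obtain ⟨j, hj⟩ := hA
    have hint : ∀ i : Fin (k + 1), i ≠ j.succ → ∃ zz : ℤ, μ i = zz := by
      intro i hi
      have hii : IsIntegralVec (vi i) := by
        by_contra hni
        exact hi (hsub hni hj)
      obtain ⟨z, hz⟩ := dot_int hu_int hii
      exact ⟨z, by rw [← hvi i, hz]⟩
    have h0 : (0 : Fin (k+1)) ≠ j.succ := (Fin.succ_ne_zero j).symm
    obtain ⟨z0, hz0⟩ := hint 0 h0
    -- each non-j floor is exact
    have hfl : ∀ i : Fin k, i ≠ j → (⌊μ i.succ⌋ : ℝ) = μ i.succ := by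
      intro i hij
      obtain ⟨z, hz⟩ := hint i.succ (fun h => hij (Fin.succ_injective k h))
      rw [hz, Int.floor_intCast]
    -- strict bound
    have hstrict : ∑ i : Fin k, (μ i.succ - if i = j then 1 else 0)
        < ∑ i : Fin k, (⌊μ i.succ⌋ : ℝ) := by
      apply Finset.sum_lt_sum
      · intro i _
        by_cases hij : i = j
        · subst hij
          rw [if_pos rfl]
          exact (Int.sub_one_lt_floor (μ i.succ)).le
        · rw [if_neg hij, hfl i hij]
          simp
      · exact ⟨j, Finset.mem_univ j, by
          rw [if_pos rfl]
          exact Int.sub_one_lt_floor (μ j.succ)⟩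
    have hsplit : ∑ i : Fin k, (μ i.succ - if i = j then 1 else 0)
        = (∑ i : Fin k, μ i.succ) - 1 := by
      rw [Finset.sum_sub_distrib, Finset.sum_ite_eq' Finset.univ j (fun _ => (1:ℝ))]
      simp
    -- the quantity is an integer > -1
    set NN : ℤ := z0 + ∑ i : Fin k, ⌊μ i.succ⌋ with hNN
    have hcast : μ 0 + ∑ i : Fin k, (⌊μ i.succ⌋ : ℝ) = (NN : ℝ) := by
      rw [hNN, hz0]
      push_cast
      ring
    have hgt : ((-1 : ℤ) : ℝ) < (NN : ℝ) := by
      rw [← hcast]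
      have hall : ∑ i : Fin (k+1), μ i = μ 0 + ∑ i : Fin k, μ i.succ := Fin.sum_univ_succ μ
      push_cast
      linarith [hstrict, hsplit]
    have hNN0 : (0 : ℤ) ≤ NN := by
      have h : (-1 : ℤ) < NN := by exact_mod_cast hgt
      omega
    rw [hcast]
    exact_mod_cast hNN0

end Final
section Part1

variable {n k : ℕ}

lemma DD.part1 (D : DeformationDatum n k) {u : Fin n → ℝ} (hu_int : IsIntegralVec u)
    (hu : ∀ x ∈ D.σ, 0 ≤ dot u x)
    (μi : Fin (k + 1) → ℝ) (hμ : ∀ i, IsLeast ((fun x => dot u x) '' D.Qi i) (μi i)) :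
    ∀ p ∈ tildeSigma D, 0 ≤ dot u p.1 - ∑ i : Fin k, (⌊μi i.succ⌋ : ℝ) * p.2 i := by
  obtain ⟨hm, vi, hvi, hsub⟩ := DD.key D hu μi hμ
  have hfloor : 0 ≤ μi 0 + ∑ i : Fin k, (⌊μi i.succ⌋ : ℝ) :=
    floor_bound hu_int μi hm vi hvi hsub
  set Φ : (Fin n → ℝ) × (Fin k → ℝ) → ℝ :=
    fun p => dot u p.1 - ∑ i : Fin k, (⌊μi i.succ⌋ : ℝ) * p.2 i with hΦ
  have hΦlin : IsLinearMap ℝ Φ := by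
    constructor
    · intro p q
      rw [hΦ]
      dsimp only
      simp only [Prod.fst_add, Prod.snd_add, Pi.add_apply, dot_add_right, mul_add,
        Finset.sum_add_distrib]
      ring
    · intro c p
      rw [hΦ]
      dsimp only
      simp only [Prod.smul_fst, Prod.smul_snd, Pi.smul_apply, smul_eq_mul, dot_smul_right]
      have hs : ∑ i : Fin k, (⌊μi i.succ⌋:ℝ) * (c * p.2 i)
          = c * ∑ i : Fin k, (⌊μi i.succ⌋:ℝ) * p.2 i := by
        rw [Finset.mul_sum]
        exact Finset.sum_congr rfl fun i _ => by ring
      rw [hs]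
      ring
  intro p hp
  have hgens : ∀ g ∈ tildeGens D, 0 ≤ Φ g := by
    intro g hg
    rcases hg with (hg | hg) | hg
    · obtain ⟨h1, h2⟩ := hg
      rw [hΦ]
      dsimp only
      have h2' : g.2 = 0 := h2
      rw [h2']
      simp only [Pi.zero_apply, mul_zero, Finset.sum_const_zero, sub_zero]
      exact hu g.1 h1
    · obtain ⟨h1, h2⟩ := hg
      rw [hΦ]
      dsimp only
      rw [h2]
      have hneg : ∑ i : Fin k, (⌊μi i.succ⌋:ℝ) * (-1)
          = -∑ i : Fin k, (⌊μi i.succ⌋:ℝ) := by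
        rw [← Finset.sum_neg_distrib]
        exact Finset.sum_congr rfl fun i _ => by ring
      rw [hneg, sub_neg_eq_add]
      have hq := (hμ 0).2 ⟨g.1, h1, rfl⟩
      simp only at hq
      linarith
    · rw [Set.mem_iUnion] at hg
      obtain ⟨i, h1, h2⟩ := hg
      rw [hΦ]
      dsimp only
      rw [h2]
      have hsum : ∑ j : Fin k, (⌊μi j.succ⌋:ℝ) * (Pi.single i (1:ℝ) : Fin k → ℝ) j
          = (⌊μi i.succ⌋:ℝ) := by
        rw [Finset.sum_eq_single i]
        · simp
        · intro b _ hb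
          simp [Pi.single_apply, hb]
        · intro h
          exact absurd (Finset.mem_univ i) h
      rw [hsum]
      have hq := (hμ i.succ).2 ⟨g.1, h1, rfl⟩
      simp only at hq
      have hfl := Int.floor_le (μi i.succ)
      linarith
  exact coneHull_nonneg hΦlin hgens hp

end Part1
/-- For every integral `u` nonnegative on `σ`, the functional
`ũ(x, y) = ⟨u, x⟩ − ∑ᵢ ⌊min_{Qᵢ} ⟨u, ·⟩⌋ · yᵢ` (for `i = 1, …, k`) is nonnegative on
`σ̃`. Consequently, the projection `(u, a₁, …, a_k) ↦ u` restricts to a surjection from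
the integral linear functionals on `ℝⁿ × ℝᵏ` nonnegative on `σ̃` onto the integral
linear functionals on `ℝⁿ` nonnegative on `σ`. -/
theorem dual_projection_surjective (n k : ℕ) (hk : 1 ≤ k) (D : DeformationDatum n k) :
    (∀ u : Fin n → ℝ, IsIntegralVec u → (∀ x ∈ D.σ, 0 ≤ dot u x) →
      ∀ μi : Fin (k + 1) → ℝ, (∀ i, IsLeast ((fun x => dot u x) '' D.Qi i) (μi i)) →
      ∀ p ∈ tildeSigma D,
        0 ≤ dot u p.1 - ∑ i : Fin k, (⌊μi i.succ⌋ : ℝ) * p.2 i)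
    ∧ (∀ u : Fin n → ℝ, IsIntegralVec u → (∀ x ∈ D.σ, 0 ≤ dot u x) →
      ∃ a : Fin k → ℝ, IsIntegralVec a ∧
        ∀ p ∈ tildeSigma D, 0 ≤ dot u p.1 + dot a p.2) := by
  constructor
  · intro u hu_int hu μi hμ p hp
    exact DD.part1 D hu_int hu μi hμ p hp
  · intro u hu_int hu
    set μi : Fin (k + 1) → ℝ := fun i => (D.V i).inf' (D.hVne i) (dot u) with hμidef
    have hμ : ∀ i, IsLeast ((fun x => dot u x) '' D.Qi i) (μi i) :=
      fun i => DD.isLeast_Qi D hu i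
    refine ⟨fun i => -(⌊μi i.succ⌋ : ℝ), fun j => ⟨-⌊μi j.succ⌋, by push_cast; ring⟩, ?_⟩
    intro p hp
    have h := DD.part1 D hu_int hu μi hμ p hp
    have hdot : dot (fun i => -(⌊μi i.succ⌋ : ℝ)) p.2
        = -∑ i : Fin k, (⌊μi i.succ⌋ : ℝ) * p.2 i := by
      rw [dot, ← Finset.sum_neg_distrib]
      exact Finset.sum_congr rfl fun i _ => by ring
    rw [hdot]
    linarith
end

section
/- Let S = ℂ[x₁, …, x_n] be a polynomial ring over ℂ in finitely many indeterminates, and let m₁, …, m_t ∈ S be monomials, each different from 1, such that the t sets of indeterminates appearing in these monomials have pairwise empty intersections. Let R be the ℂ-subalgebra of S generated by m₁, …, m_t. Then S is a free R-module. -/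
open MvPolynomial

section Aux

variable {n t : ℕ} (b : Fin t → Fin n → ℕ)

/-- The exponent vector `∑ i, k i • b i` as a `Finsupp`. -/
noncomputable def NK (k : Fin t → ℕ) : Fin n →₀ ℕ :=
  ∑ i, k i • Finsupp.equivFunOnFinite.symm (b i)

lemma NK_apply (k : Fin t → ℕ) (j : Fin n) : NK b k j = ∑ i, k i * b i j := by
  simp [NK, Finsupp.finset_sum_apply]

lemma NK_add (k k' : Fin t → ℕ) : NK b (k + k') = NK b k + NK b k' := by
  ext j
  simp [NK_apply, add_mul, Finset.sum_add_distrib]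

lemma NK_single (i : Fin t) : NK b (Pi.single i 1) = Finsupp.equivFunOnFinite.symm (b i) := by
  ext j
  rw [NK_apply, Finset.sum_eq_single i]
  · simp
  · intro i' _ hi'; simp [Pi.single_apply, hi']
  · simp

lemma NK_collapse (hdisj : ∀ i i' : Fin t, i ≠ i' → ∀ j : Fin n, b i j = 0 ∨ b i' j = 0) (k : Fin t → ℕ) {i : Fin t} {j : Fin n} (hij : 0 < b i j) :
    NK b k j = k i * b i j := by
  rw [NK_apply, Finset.sum_eq_single i]
  · intro i' _ hi'
    rcases hdisj i' i hi' j with h | h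
    · simp [h]
    · omega
  · simp

lemma exists_decomp (hdisj : ∀ i i' : Fin t, i ≠ i' → ∀ j : Fin n, b i j = 0 ∨ b i' j = 0) (hb : ∀ i, ∃ j, 0 < b i j) (a : Fin n →₀ ℕ) :
    ∃ k r, (∀ i, ∃ j, r j < b i j) ∧ a = NK b k + r := by
  classical
  set s : Fin t → Finset (Fin n) := fun i => Finset.univ.filter (fun j => 0 < b i j) with hs
  have hsne : ∀ i, (s i).Nonempty := by
    intro i; obtain ⟨j, hj⟩ := hb i
    exact ⟨j, by simp [hs, hj]⟩
  set k : Fin t → ℕ := fun i => (s i).inf' (hsne i) (fun j => a j / b i j) with hk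
  have hle : ∀ j, NK b k j ≤ a j := by
    intro j
    by_cases h : ∃ i, 0 < b i j
    · obtain ⟨i, hi⟩ := h
      rw [NK_collapse b hdisj k hi]
      have h1 : k i ≤ a j / b i j := Finset.inf'_le _ (by simp [hs, hi])
      calc k i * b i j ≤ (a j / b i j) * b i j := Nat.mul_le_mul_right _ h1
        _ ≤ a j := Nat.div_mul_le_self _ _
    · push_neg at h
      rw [NK_apply]
      have : ∀ i, b i j = 0 := fun i => Nat.le_zero.mp (h i)
      simp [this]
  refine ⟨k, a - NK b k, ?_, ?_⟩
  · intro i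
    obtain ⟨j, hj, hjeq⟩ := Finset.exists_mem_eq_inf' (hsne i) (fun j => a j / b i j)
    have hbij : 0 < b i j := by simpa [hs] using hj
    refine ⟨j, ?_⟩
    rw [Finsupp.tsub_apply, NK_collapse b hdisj k hbij]
    have hki : k i = a j / b i j := hjeq
    rw [hki]
    have h1 : a j / b i j * b i j + a j % b i j = a j := Nat.div_add_mod' _ _
    have h2 := Nat.mod_lt (a j) hbij
    omega
  · ext j
    rw [Finsupp.add_apply, Finsupp.tsub_apply]
    have := hle j
    omega

lemma k_le_of_decomp (hdisj : ∀ i i' : Fin t, i ≠ i' → ∀ j : Fin n, b i j = 0 ∨ b i' j = 0) {k k' : Fin t → ℕ} {r r' : Fin n →₀ ℕ}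
    (hr : ∀ i, ∃ j, r j < b i j) (h : NK b k + r = NK b k' + r') :
    ∀ i, k' i ≤ k i := by
  intro i
  by_contra hki
  push_neg at hki
  obtain ⟨j, hj⟩ := hr i
  have hbij : 0 < b i j := by omega
  have hj' := congrArg (fun f : Fin n →₀ ℕ => f j) h
  simp only [Finsupp.add_apply] at hj'
  rw [NK_collapse b hdisj k hbij, NK_collapse b hdisj k' hbij] at hj'
  have h1 : k i * b i j + b i j ≤ k' i * b i j := by
    have h := Nat.mul_le_mul_right (b i j) (show k i + 1 ≤ k' i by omega)
    rwa [Nat.succ_mul] at h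
  omega

lemma decomp_unique (hdisj : ∀ i i' : Fin t, i ≠ i' → ∀ j : Fin n, b i j = 0 ∨ b i' j = 0) {k k' : Fin t → ℕ} {r r' : Fin n →₀ ℕ}
    (hr : ∀ i, ∃ j, r j < b i j) (hr' : ∀ i, ∃ j, r' j < b i j)
    (h : NK b k + r = NK b k' + r') : k = k' ∧ r = r' := by
  have h1 := k_le_of_decomp b hdisj hr h
  have h2 := k_le_of_decomp b hdisj hr' h.symm
  have hkk : k = k' := funext fun i => le_antisymm (h2 i) (h1 i)
  subst hkk
  exact ⟨rfl, by simpa using h⟩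

end Aux

set_option maxHeartbeats 1000000 in
/-- If `m₁, …, m_t` are monomials in `S = ℂ[x₁, …, xₙ]`, each different from `1`, whose sets
of appearing indeterminates are pairwise disjoint, and `R` is the `ℂ`-subalgebra of `S`
generated by `m₁, …, m_t`, then `S` is a free `R`-module. -/
theorem polynomialRing_free_over_adjoin_of_disjoint_monomials (n t : ℕ)
    (b : Fin t → Fin n → ℕ)
    (hne : ∀ i, (∏ j, (X j : MvPolynomial (Fin n) ℂ) ^ b i j) ≠ 1)
    (hdisj : ∀ i i' : Fin t, i ≠ i' → ∀ j : Fin n, b i j = 0 ∨ b i' j = 0) :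
    Module.Free
      (Algebra.adjoin ℂ
        (Set.range fun i : Fin t => ∏ j, (X j : MvPolynomial (Fin n) ℂ) ^ b i j))
      (MvPolynomial (Fin n) ℂ) := by
  classical
  set f : Fin t → MvPolynomial (Fin n) ℂ := fun i => ∏ j, (X j : MvPolynomial (Fin n) ℂ) ^ b i j with hf
  set R := Algebra.adjoin ℂ (Set.range f) with hR
  set B : Fin t → (Fin n →₀ ℕ) := fun i => Finsupp.equivFunOnFinite.symm (b i) with hB
  have hm : ∀ i, f i = monomial (B i) (1 : ℂ) := by
    intro i
    rw [hf, ← prod_X_pow_eq_monomial]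
    refine (Finset.prod_subset (Finset.subset_univ _) ?_).symm
    intro j _ hj
    have : B i j = 0 := by simpa using hj
    have hbij : b i j = 0 := by simpa [hB] using this
    simp [hbij]
  have hb : ∀ i, ∃ j, 0 < b i j := by
    intro i
    by_contra h
    push_neg at h
    apply hne i
    have : ∀ j, b i j = 0 := fun j => Nat.le_zero.mp (h j)
    simp [this]
  set g : (Fin t → ℕ) → MvPolynomial (Fin n) ℂ := fun k => monomial (NK b k) (1 : ℂ) with hg
  have hprod : ∀ k : Fin t → ℕ, ∏ i, f i ^ k i = g k := by
    intro k
    have : ∀ i, f i ^ k i = monomial (k i • B i) (1 : ℂ) := by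
      intro i; rw [hm i, monomial_pow, one_pow]
    rw [Finset.prod_congr rfl (fun i _ => this i)]
    -- ∏ monomial (d i) 1 = monomial (∑ d i) 1
    clear this
    show ∏ i, monomial (k i • B i) (1:ℂ) = monomial (∑ i, k i • B i) (1:ℂ)
    induction (Finset.univ : Finset (Fin t)) using Finset.induction_on with
    | empty => simp
    | insert _ _ hx ih =>
        rw [Finset.prod_insert hx, Finset.sum_insert hx, ih, monomial_mul, one_mul]
  -- the target submonoid
  set T : Submonoid (MvPolynomial (Fin n) ℂ) :=
    { carrier := Set.range g
      one_mem' := ⟨0, by simp [hg, NK]⟩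
      mul_mem' := by
        rintro x y ⟨k, rfl⟩ ⟨k', rfl⟩
        refine ⟨k + k', ?_⟩
        show monomial (NK b (k + k')) (1:ℂ) = monomial (NK b k) (1:ℂ) * monomial (NK b k') (1:ℂ)
        rw [NK_add, monomial_mul, one_mul] } with hT
  have hclosure : (Submonoid.closure (Set.range f) : Set (MvPolynomial (Fin n) ℂ)) ⊆ Set.range g := by
    have : Submonoid.closure (Set.range f) ≤ T := by
      rw [Submonoid.closure_le]
      rintro x ⟨i, rfl⟩
      refine ⟨Pi.single i 1, ?_⟩
      show monomial (NK b (Pi.single i 1)) (1:ℂ) = f i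
      rw [NK_single, hm i]
    exact this
  have hspanR : ∀ x : R, (x : MvPolynomial (Fin n) ℂ) ∈ Submodule.span ℂ (Set.range g) := by
    intro x
    have hx : (x : MvPolynomial (Fin n) ℂ) ∈ Subalgebra.toSubmodule (Algebra.adjoin ℂ (Set.range f)) := x.2
    rw [Algebra.adjoin_eq_span] at hx
    exact Submodule.span_mono hclosure hx
  have hcoeff0 : ∀ p ∈ Submodule.span ℂ (Set.range g), ∀ a : Fin n →₀ ℕ,
      (∀ k, a ≠ NK b k) → coeff a p = 0 := by
    intro p hp a ha
    induction hp using Submodule.span_induction with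
    | mem x hx =>
        obtain ⟨k, rfl⟩ := hx
        rw [hg, coeff_monomial, if_neg]
        exact fun h => ha k h.symm
    | zero => simp
    | add x y _ _ hx hy => rw [coeff_add, hx, hy, add_zero]
    | smul c x _ hx => rw [coeff_smul, hx, smul_zero]
  -- the basis
  set Red : Set (Fin n →₀ ℕ) := {r | ∀ i, ∃ j, r j < b i j} with hRed
  set v : Red → MvPolynomial (Fin n) ℂ := fun r => monomial r.1 (1 : ℂ) with hv
  have hgmem : ∀ k, g k ∈ R := by
    intro k
    rw [← hprod]
    exact prod_mem fun i _ => pow_mem (Algebra.subset_adjoin (show f i ∈ Set.range f from ⟨i, rfl⟩)) _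
  have hspan : ⊤ ≤ Submodule.span R (Set.range v) := by
    intro p hp
    clear hp
    induction p using MvPolynomial.induction_on' with
    | add p q hp hq => exact Submodule.add_mem _ hp hq
    | monomial u c =>
        obtain ⟨k, r, hr, rfl⟩ := exists_decomp b hdisj hb u
        have hmem : C c * g k ∈ R := by
          refine mul_mem ?_ (hgmem k)
          have := R.algebraMap_mem c
          rwa [MvPolynomial.algebraMap_eq] at this
        have h1 : monomial (NK b k + r) c = (⟨C c * g k, hmem⟩ : R) • v ⟨r, hr⟩ := by
          rw [Subalgebra.smul_def, smul_eq_mul]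
          show monomial (NK b k + r) c = C c * monomial (NK b k) (1:ℂ) * monomial r (1:ℂ)
          rw [mul_assoc, monomial_mul, one_mul, C_mul_monomial, mul_one]
        rw [h1]
        exact Submodule.smul_mem _ _ (Submodule.subset_span ⟨⟨r, hr⟩, rfl⟩)
  have hli : LinearIndependent R v := by
    rw [linearIndependent_iff]
    intro l hl
    ext r₀
    have key : ∀ k : Fin t → ℕ, coeff (NK b k) ((l r₀ : R) : MvPolynomial (Fin n) ℂ) = 0 := by
      intro k
      have hc := congrArg (coeff (NK b k + r₀.1)) hl
      rw [Finsupp.linearCombination_apply, Finsupp.sum, coeff_sum, coeff_zero] at hc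
      have hterm : ∀ r : Red,
          coeff (NK b k + r₀.1) (l r • v r) =
          if r.1 ≤ NK b k + r₀.1 then coeff (NK b k + r₀.1 - r.1) ((l r : R) : MvPolynomial (Fin n) ℂ) else 0 := by
        intro r
        rw [Subalgebra.smul_def, smul_eq_mul, hv]
        rw [coeff_mul_monomial']
        split_ifs <;> simp
      rw [Finset.sum_congr rfl (fun r _ => hterm r)] at hc
      rw [Finset.sum_eq_single r₀] at hc
      · rw [if_pos le_add_self, add_tsub_cancel_right] at hc
        exact hc
      · intro r _ hrne
        split_ifs with hle
        · by_contra hne0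
          have h2 : ∃ k', NK b k + r₀.1 - r.1 = NK b k' := by
            by_contra h3
            push_neg at h3
            exact hne0 (hcoeff0 _ (hspanR (l r)) _ h3)
          obtain ⟨k', hk'⟩ := h2
          have h4 : NK b k' + r.1 = NK b k + r₀.1 := by
            rw [← hk', tsub_add_cancel_of_le hle]
          obtain ⟨-, h5⟩ := decomp_unique b hdisj r.2 r₀.2 h4
          exact hrne (Subtype.ext h5)
        · rfl
      · intro h
        rw [Finsupp.notMem_support_iff.mp h]
        simp
    have hz : ((l r₀ : R) : MvPolynomial (Fin n) ℂ) = 0 := by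
      apply MvPolynomial.ext
      intro a
      rw [coeff_zero]
      by_cases h : ∃ k, a = NK b k
      · obtain ⟨k, rfl⟩ := h; exact key k
      · push_neg at h
        exact hcoeff0 _ (hspanR (l r₀)) _ h
    have hz' : l r₀ = 0 := by
      rw [Subtype.ext_iff, ZeroMemClass.coe_zero]
      exact hz
    rw [hz', Finsupp.zero_apply]
  exact Module.Free.of_basis (Module.Basis.mk hli hspan)
end

section
/- Let S = ℂ[x₁, …, x_n] with n ≥ 1, let a₁, …, a_n be positive integers, let m = x₁^{a₁} ⋯ x_n^{a_n}, and let R be the ℂ-subalgebra of S generated by m. Then the set of monomials ⋃_{i=1}^{n} { x₁^{b₁} ⋯ x_n^{b_n} : bᵢ < aᵢ } is a basis of S as an R-module; in particular S is a free R-module with this basis. -/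
open MvPolynomial

private lemma prod_X_pow_eq_monomial'' {n : ℕ} (f : Fin n → ℕ) :
    (∏ i, (X i : MvPolynomial (Fin n) ℂ) ^ f i) =
      monomial (Finsupp.equivFunOnFinite.symm f) 1 := by
  rw [← prod_X_pow_eq_monomial]
  refine Eq.symm (Finset.prod_subset (Finset.subset_univ _) fun i _ hi => ?_)
  rw [Finsupp.notMem_support_iff] at hi
  rw [hi, pow_zero]

/-- Let `S = ℂ[x₁, …, xₙ]` with `n ≥ 1`, let `a₁, …, aₙ` be positive integers,
`m = x₁^{a₁} ⋯ xₙ^{aₙ}`, and `R = ℂ[m]` the `ℂ`-subalgebra generated by `m`.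
Then the monomials `x₁^{b₁} ⋯ xₙ^{bₙ}` with `bᵢ < aᵢ` for some `i` form a basis of `S`
as an `R`-module; in particular `S` is a free `R`-module with this basis. -/
theorem basis_over_adjoin_single_monomial (n : ℕ) (hn : 1 ≤ n)
    (a : Fin n → ℕ) (ha : ∀ i, 0 < a i) :
    ∃ bas : Module.Basis {b : Fin n → ℕ // ∃ i, b i < a i}
        (Algebra.adjoin ℂ
          ({∏ i, (X i : MvPolynomial (Fin n) ℂ) ^ a i} : Set (MvPolynomial (Fin n) ℂ)))
        (MvPolynomial (Fin n) ℂ),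
      ∀ b : {b : Fin n → ℕ // ∃ i, b i < a i},
        bas b = ∏ i, (X i : MvPolynomial (Fin n) ℂ) ^ (b : Fin n → ℕ) i := by
  classical
  haveI : Nonempty (Fin n) := Fin.pos_iff_nonempty.mp hn
  set S := MvPolynomial (Fin n) ℂ
  set m : S := ∏ i, (X i : S) ^ a i with hm
  set R := Algebra.adjoin ℂ ({m} : Set S) with hRdef
  set A : Fin n →₀ ℕ := Finsupp.equivFunOnFinite.symm a with hAdef
  have hmA : m = monomial A 1 := prod_X_pow_eq_monomial'' a
  set T := {b : Fin n → ℕ // ∃ i, b i < a i}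
  set B : T → (Fin n →₀ ℕ) := fun b => Finsupp.equivFunOnFinite.symm b.1 with hBdef
  set v : T → S := fun b => monomial (B b) 1 with hvdef
  -- injectivity of (b, k) ↦ B b + k • A
  have hinj : ∀ (b b' : T) (k k' : ℕ), B b + k • A = B b' + k' • A → b = b' ∧ k = k' := by
    intro b b' k k' h
    have hpt : ∀ i, b.1 i + k * a i = b'.1 i + k' * a i := by
      intro i
      have := DFunLike.congr_fun h i
      simpa [hBdef, hAdef, Finsupp.add_apply, Finsupp.smul_apply] using this
    have hkk : k = k' := by
      rcases Nat.lt_trichotomy k k' with hlt | heq | hlt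
      · exfalso
        obtain ⟨i, hi⟩ := b.2
        have h1 : b.1 i + k * a i ≥ k' * a i := (hpt i) ▸ Nat.le_add_left _ _
        have h2 : (k + 1) * a i ≤ k' * a i := Nat.mul_le_mul_right _ hlt
        have : b.1 i ≥ a i := by nlinarith [hpt i]
        omega
      · exact heq
      · exfalso
        obtain ⟨i, hi⟩ := b'.2
        have : b'.1 i ≥ a i := by nlinarith [hpt i]
        omega
    refine ⟨?_, hkk⟩
    subst hkk
    have : b.1 = b'.1 := by
      funext i
      have := hpt i
      omega
    exact Subtype.ext this
  -- coefficients of elements of R are supported on multiples of A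
  have hcoeffR : ∀ r : S, r ∈ R → ∀ e : Fin n →₀ ℕ, coeff e r ≠ 0 → ∃ k : ℕ, e = k • A := by
    intro r hr e he
    rw [hRdef, Algebra.adjoin_singleton_eq_range_aeval] at hr
    obtain ⟨p, rfl⟩ := hr
    by_contra hk
    push_neg at hk
    apply he
    rw [show ((Polynomial.aeval m).toRingHom p : S) = Polynomial.aeval m p from rfl,
      Polynomial.aeval_def, Polynomial.eval₂_eq_sum, Polynomial.sum, coeff_sum]
    apply Finset.sum_eq_zero
    intro k _
    have hterm : (algebraMap ℂ S) (p.coeff k) * m ^ k = monomial (k • A) (p.coeff k) := by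
      rw [hmA, monomial_pow, one_pow, algebraMap_eq, C_mul_monomial, mul_one]
    rw [hterm, coeff_monomial, if_neg (fun h => hk k h.symm)]
  -- linear independence over R
  have hli : LinearIndependent R v := by
    rw [linearIndependent_iff]
    intro l hl
    have key : ∀ (b : T) (e : Fin n →₀ ℕ), coeff e (l b : S) = 0 := by
      intro b e
      by_contra hce
      obtain ⟨k, rfl⟩ := hcoeffR (l b : S) (l b).2 e hce
      have hbsupp : b ∈ l.support := by
        rw [Finsupp.mem_support_iff]
        intro h
        apply hce
        rw [h]
        simp
      have h0 : coeff (k • A + B b) (Finsupp.linearCombination R v l) = 0 := by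
        rw [hl]; simp
      rw [Finsupp.linearCombination_apply, Finsupp.sum] at h0
      have hsmul : ∀ b' : T, (l b') • v b' = (l b' : S) * monomial (B b') 1 := fun b' => rfl
      simp only [hsmul] at h0
      rw [coeff_sum] at h0
      rw [Finset.sum_eq_single_of_mem b hbsupp ?_] at h0
      · rw [coeff_mul_monomial', if_pos le_add_self, add_tsub_cancel_right, mul_one] at h0
        exact hce h0
      · intro b' _ hne
        rw [coeff_mul_monomial']
        split_ifs with hle
        · rw [mul_one]
          by_contra hnz
          obtain ⟨k', hk'⟩ := hcoeffR (l b' : S) (l b').2 _ hnz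
          have heq : B b' + k' • A = B b + k • A := by
            rw [← hk', add_comm (B b') _, tsub_add_cancel_of_le hle, add_comm]
          exact hne (hinj b' b k' k heq).1
        · rfl
    have : ∀ b : T, l b = 0 := by
      intro b
      have : (l b : S) = 0 := by
        apply MvPolynomial.ext
        intro e
        rw [key b e, coeff_zero]
      exact Subtype.ext this
    exact Finsupp.ext fun b => this b
  -- spanning
  have hmR : m ∈ R := Algebra.self_mem_adjoin_singleton ℂ m
  have hsp : ⊤ ≤ Submodule.span R (Set.range v) := by
    intro p hp
    clear hp
    induction p using MvPolynomial.induction_on' with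
    | add p q hp hq => exact Submodule.add_mem _ hp hq
    | monomial c r =>
      set k : ℕ := Finset.univ.inf' Finset.univ_nonempty (fun i => c i / a i) with hkdef
      have hkle : ∀ i, k * a i ≤ c i := by
        intro i
        have h1 : k ≤ c i / a i := Finset.inf'_le _ (Finset.mem_univ i)
        calc k * a i ≤ (c i / a i) * a i := Nat.mul_le_mul_right _ h1
          _ ≤ c i := Nat.div_mul_le_self _ _
      have hb : ∃ i, (fun i => c i - k * a i) i < a i := by
        obtain ⟨i, _, hi⟩ := Finset.exists_mem_eq_inf' Finset.univ_nonempty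
          (fun i => c i / a i)
        refine ⟨i, ?_⟩
        have hkeq : k = c i / a i := hkdef.trans hi
        have h1 := Nat.lt_div_mul_add (a := c i) (ha i)
        have h2 := ha i
        show c i - k * a i < a i
        rw [hkeq]
        omega
      set b0 : T := ⟨fun i => c i - k * a i, hb⟩ with hb0
      have hc : c = k • A + B b0 := by
        apply Finsupp.ext
        intro i
        have hk := hkle i
        simp only [hb0, hBdef, hAdef, Finsupp.add_apply, Finsupp.smul_apply,
          Finsupp.equivFunOnFinite_symm_apply_apply, smul_eq_mul]
        omega
      have hCr : (C r : S) ∈ R := by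
        rw [← algebraMap_eq]
        exact Subalgebra.algebraMap_mem R r
      set s : R := ⟨C r * m ^ k, mul_mem hCr (pow_mem hmR k)⟩ with hsdef
      have hmono : (monomial c r : S) = s • v b0 := by
        have : s • v b0 = (C r * m ^ k) * monomial (B b0) 1 := rfl
        rw [this, hmA, monomial_pow, one_pow, mul_assoc, monomial_mul, one_mul,
          C_mul_monomial, mul_one, ← hc]
      rw [hmono]
      exact Submodule.smul_mem _ s (Submodule.subset_span (Set.mem_range_self _))
  refine ⟨Module.Basis.mk hli hsp, fun b => ?_⟩
  rw [Module.Basis.mk_apply, hvdef]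
  exact (prod_X_pow_eq_monomial'' b.1).symm
end

section
/- Let S = ℂ[x₁, …, x_r, y₁, …, y_s, z₁, …, z_t] with r, s, t ≥ 1. Fix exponent vectors α₁, …, α_r ∈ ℕ and β₁, …, β_s ∈ ℕ, not all αᵢ zero and not all βⱼ zero, and set z₀' = z₁ ⋯ z_t. If a, b, c ∈ ℂ are such that ab ≠ 0 or c ≠ 0, then a·x₁^{α₁}⋯x_r^{α_r} + b·y₁^{β₁}⋯y_s^{β_s} + c·z₁⋯z_t, x₁⋯x_r·y₁⋯y_s is a regular sequence in S. -/
open MvPolynomial Pointwise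

private lemma mvPrime_X {σ : Type*} (i : σ) : Prime (X i : MvPolynomial σ ℂ) := by
  classical
  let e := ((renameEquiv ℂ (Equiv.optionSubtypeNe i).symm).trans
      (optionEquivLeft ℂ {j : σ // j ≠ i})).toMulEquiv
  rw [← MulEquiv.prime_iff e]
  have he : e (X i) = Polynomial.X := by
    show (optionEquivLeft ℂ _) ((renameEquiv ℂ (Equiv.optionSubtypeNe i).symm) (X i)) = _
    rw [renameEquiv_apply, rename_X, Equiv.optionSubtypeNe_symm_self, optionEquivLeft_X_none]
  rw [he]
  exact Polynomial.prime_X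

/-- Let `S = ℂ[x₁, …, x_r, y₁, …, y_s, z₁, …, z_t]` with `r, s, t ≥ 1`. Fix exponent
vectors `α` and `β`, not all entries zero. If `a, b, c ∈ ℂ` satisfy `a·b ≠ 0` or `c ≠ 0`,
then the trinomial `a·x^α + b·y^β + c·z₁⋯z_t` together with the monomial
`x₁⋯x_r·y₁⋯y_s` is a regular sequence in `S`. -/
theorem trinomial_monomial_regular_sequence (r s t : ℕ)
    (hr : 1 ≤ r) (hs : 1 ≤ s) (ht : 1 ≤ t)
    (α : Fin r → ℕ) (β : Fin s → ℕ) (hα : α ≠ 0) (hβ : β ≠ 0)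
    (a b c : ℂ) (habc : a * b ≠ 0 ∨ c ≠ 0) :
    RingTheory.Sequence.IsRegular (MvPolynomial (Fin r ⊕ Fin s ⊕ Fin t) ℂ)
      [C a * ∏ i, (X (Sum.inl i) : MvPolynomial (Fin r ⊕ Fin s ⊕ Fin t) ℂ) ^ α i
          + C b * ∏ j, (X (Sum.inr (Sum.inl j)) : MvPolynomial (Fin r ⊕ Fin s ⊕ Fin t) ℂ) ^ β j
          + C c * ∏ l, (X (Sum.inr (Sum.inr l)) : MvPolynomial (Fin r ⊕ Fin s ⊕ Fin t) ℂ),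
        (∏ i, (X (Sum.inl i) : MvPolynomial (Fin r ⊕ Fin s ⊕ Fin t) ℂ))
          * ∏ j, (X (Sum.inr (Sum.inl j)) : MvPolynomial (Fin r ⊕ Fin s ⊕ Fin t) ℂ)] := by
  classical
  obtain ⟨i0, hi0⟩ : ∃ i, α i ≠ 0 := Function.ne_iff.mp hα
  obtain ⟨j0, hj0⟩ : ∃ j, β j ≠ 0 := Function.ne_iff.mp hβ
  have l0 : Fin t := ⟨0, ht⟩
  set S := MvPolynomial (Fin r ⊕ Fin s ⊕ Fin t) ℂ with hS
  set f : S := C a * ∏ i, X (Sum.inl i) ^ α i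
      + C b * ∏ j, X (Sum.inr (Sum.inl j)) ^ β j
      + C c * ∏ l, X (Sum.inr (Sum.inr l)) with hfdef
  set g : S := (∏ i, X (Sum.inl i)) * ∏ j, X (Sum.inr (Sum.inl j)) with hgdef
  -- the three exponent vectors
  let mx : (Fin r ⊕ Fin s ⊕ Fin t) →₀ ℕ := ∑ i, Finsupp.single (Sum.inl i) (α i)
  let my : (Fin r ⊕ Fin s ⊕ Fin t) →₀ ℕ := ∑ j, Finsupp.single (Sum.inr (Sum.inl j)) (β j)
  let mz : (Fin r ⊕ Fin s ⊕ Fin t) →₀ ℕ := ∑ l, Finsupp.single (Sum.inr (Sum.inr l)) 1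
  have hmx1 : ∀ i, mx (Sum.inl i) = α i := fun i => by
    simp [mx, Finsupp.finset_sum_apply, Finsupp.single_apply, Sum.inl.injEq]
  have hmx2 : ∀ w, mx (Sum.inr w) = 0 := fun w => by
    simp [mx, Finsupp.finset_sum_apply, Finsupp.single_apply]
  have hmy1 : ∀ j, my (Sum.inr (Sum.inl j)) = β j := fun j => by
    simp [my, Finsupp.finset_sum_apply, Finsupp.single_apply]
  have hmy2 : ∀ i, my (Sum.inl i) = 0 := fun i => by
    simp [my, Finsupp.finset_sum_apply, Finsupp.single_apply]
  have hmy3 : ∀ l, my (Sum.inr (Sum.inr l)) = 0 := fun l => by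
    simp [my, Finsupp.finset_sum_apply, Finsupp.single_apply]
  have hmz1 : ∀ l, mz (Sum.inr (Sum.inr l)) = 1 := fun l => by
    simp [mz, Finsupp.finset_sum_apply, Finsupp.single_apply]
  have hmz2 : ∀ i, mz (Sum.inl i) = 0 := fun i => by
    simp [mz, Finsupp.finset_sum_apply, Finsupp.single_apply]
  have hmz3 : ∀ j, mz (Sum.inr (Sum.inl j)) = 0 := fun j => by
    simp [mz, Finsupp.finset_sum_apply, Finsupp.single_apply]
  -- f as a sum of monomials
  have hf : f = monomial mx a + monomial my b + monomial mz c := by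
    rw [hfdef]
    congr 1
    · congr 1
      · simp [mx, monomial_sum_index, X_pow_eq_monomial]
      · simp [my, monomial_sum_index, X_pow_eq_monomial]
    · simp only [mz, monomial_sum_index]
      congr 1
  -- distinctness of the three monomials
  have hxy : mx ≠ my := fun h => hi0 (by rw [← hmx1 i0, h, hmy2 i0])
  have hxz : mx ≠ mz := fun h => hi0 (by rw [← hmx1 i0, h, hmz2 i0])
  have hyz : my ≠ mz := fun h => hj0 (by rw [← hmy1 j0, h, hmz3 j0])
  -- coefficients of f
  have hcx : coeff mx f = a := by
    rw [hf]; simp [coeff_monomial, hxy, hxz, Ne.symm hxy, Ne.symm hxz]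
  have hcy : coeff my f = b := by
    rw [hf]; simp [coeff_monomial, hxy, hyz, Ne.symm hxy, Ne.symm hyz]
  have hcz : coeff mz f = c := by
    rw [hf]; simp [coeff_monomial, hxz, hyz, Ne.symm hxz, Ne.symm hyz]
  -- a criterion for non-divisibility by a variable
  have hndvd : ∀ (v : Fin r ⊕ Fin s ⊕ Fin t) (m : (Fin r ⊕ Fin s ⊕ Fin t) →₀ ℕ),
      m v = 0 → coeff m f ≠ 0 → ¬ X v ∣ f := by
    rintro v m hmv hc ⟨q, hq⟩
    rw [hq, coeff_X_mul'] at hc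
    simp [Finsupp.mem_support_iff, hmv] at hc
  -- no x- or y-variable divides f
  have hx : ∀ i, ¬ X (Sum.inl i) ∣ f := by
    intro i
    rcases habc with hab | hc
    · exact hndvd _ my (hmy2 i) (by rw [hcy]; exact right_ne_zero_of_mul hab)
    · exact hndvd _ mz (hmz2 i) (by rw [hcz]; exact hc)
  have hy : ∀ j, ¬ X (Sum.inr (Sum.inl j)) ∣ f := by
    intro j
    rcases habc with hab | hc
    · exact hndvd _ mx (hmx2 (Sum.inl j)) (by rw [hcx]; exact left_ne_zero_of_mul hab)
    · exact hndvd _ mz (hmz3 j) (by rw [hcz]; exact hc)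
  -- f is nonzero
  have hf0 : f ≠ 0 := by
    rcases habc with hab | hc
    · intro h; exact left_ne_zero_of_mul hab (by rw [← hcx, h, coeff_zero])
    · intro h; exact hc (by rw [← hcz, h, coeff_zero])
  -- f and g are relatively prime
  have hrel : IsRelPrime f g := by
    rw [hgdef]
    refine IsRelPrime.mul_right ?_ ?_
    · exact IsRelPrime.prod_right fun i _ =>
        (((mvPrime_X (Sum.inl i)).irreducible.isRelPrime_iff_not_dvd).mpr (hx i)).symm
    · exact IsRelPrime.prod_right fun j _ =>
        (((mvPrime_X (Sum.inr (Sum.inl j))).irreducible.isRelPrime_iff_not_dvd).mpr (hy j)).symm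
  -- membership in f • ⊤ is divisibility by f
  have hmem : ∀ p : S, p ∈ (f • (⊤ : Submodule S S)) ↔ f ∣ p := by
    intro p
    rw [← Submodule.ideal_span_singleton_smul, smul_eq_mul, Ideal.mul_top,
      Ideal.mem_span_singleton]
  -- first regularity
  have hfreg : IsSMulRegular S f := fun u v h =>
    mul_left_cancel₀ hf0 (by simpa [smul_eq_mul] using h)
  -- second regularity
  have hgreg : IsSMulRegular (QuotSMulTop f S) g := by
    intro u v huv
    obtain ⟨u, rfl⟩ := Submodule.Quotient.mk_surjective _ u
    obtain ⟨v, rfl⟩ := Submodule.Quotient.mk_surjective _ v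
    have huv' : (Submodule.Quotient.mk (g • u) : QuotSMulTop f S)
        = Submodule.Quotient.mk (g • v) := by
      simpa only [Submodule.Quotient.mk_smul] using huv
    rw [Submodule.Quotient.eq] at huv'
    rw [Submodule.Quotient.eq, hmem]
    rw [hmem] at huv'
    have hdvd : f ∣ g * (u - v) := by
      convert huv' using 1
      rw [smul_eq_mul, smul_eq_mul]
      ring
    exact hrel.dvd_of_dvd_mul_left hdvd
  -- the ideal is proper
  have htop : (⊤ : Submodule S S) ≠ Ideal.ofList [f, g] • ⊤ := by
    intro h
    have h2 : Ideal.ofList [f, g] • (⊤ : Ideal S) = Ideal.ofList [f, g] := by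
      rw [smul_eq_mul, Ideal.mul_top]
    rw [h2] at h
    have hle : Ideal.ofList [f, g] ≤ RingHom.ker (constantCoeff (R := ℂ)) := by
      refine Ideal.span_le.mpr ?_
      rintro p hp
      simp only [Set.mem_setOf_eq, List.mem_cons, List.mem_singleton] at hp
      rcases hp with rfl | rfl | h'
      · show constantCoeff f = 0
        have hmx0 : mx ≠ 0 := fun h => hi0 (by rw [← hmx1 i0, h]; rfl)
        have hmy0 : my ≠ 0 := fun h => hj0 (by rw [← hmy1 j0, h]; rfl)
        have hmz0 : mz ≠ 0 := fun h => by
          have := hmz1 l0; rw [h] at this; simp at this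
        rw [hf]
        simp [constantCoeff_monomial, hmx0, hmy0, hmz0]
      · show constantCoeff g = 0
        rw [hgdef]
        simp [constantCoeff_X, Finset.prod_const,
          zero_pow (Nat.one_le_iff_ne_zero.mp hr)]
      · exact absurd h' (List.not_mem_nil (a := p))
    have h1 : (1 : S) ∈ RingHom.ker (constantCoeff (R := ℂ)) := hle (h ▸ Submodule.mem_top)
    rw [RingHom.mem_ker, map_one] at h1
    exact one_ne_zero h1
  exact ⟨RingTheory.Sequence.IsWeaklyRegular.cons hfreg
    (RingTheory.Sequence.IsWeaklyRegular.cons hgreg (RingTheory.Sequence.IsWeaklyRegular.nil _ _)),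
    htop⟩
end
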